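/- arXiv:2507.09373 — 6 statements merged into one kernel-verified Lean document; each statement's English description precedes it below -/
import Mathlib

section
/- Let d ≥ 1 and 0 ≤ r ≤ d. Every rank-r sequence M_1, …, M_m of matrices in M_d(ℚ) is the yield of some factorization tree of height at most d + 2. -/
/-- A matrix `M` is *stable* if `rank M = rank M²`. -/
def MatStable {d : ℕ} (M : Matrix (Fin d) (Fin d) ℚ) : Prop :=
  M.rank = (M * M).rank

/-- `IsFactTree d h ys M` asserts that there is a factorization tree in `M_d(ℚ)` of
height at most `h`, with yield (left-to-right sequence of leaf labels) `ys` and root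
label `M`: the label of every non-leaf node is the left-to-right product of the labels
of its children, and every node with three or more children has a stable label. -/
inductive IsFactTree (d : ℕ) : ℕ → List (Matrix (Fin d) (Fin d) ℚ) → Matrix (Fin d) (Fin d) ℚ → Prop
  | leaf (h : ℕ) (M : Matrix (Fin d) (Fin d) ℚ) : IsFactTree d h [M] M
  | node (h : ℕ)
      (children : List ((List (Matrix (Fin d) (Fin d) ℚ)) × Matrix (Fin d) (Fin d) ℚ))
      (hne : children ≠ [])
      (hchildren : ∀ c ∈ children, IsFactTree d h c.1 c.2)
      (M : Matrix (Fin d) (Fin d) ℚ)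
      (hprod : M = (children.map Prod.snd).prod)
      (hstable : 3 ≤ children.length → MatStable M) :
      IsFactTree d (h + 1) (children.map Prod.fst).flatten M

/-!
For rank-`r` matrices `X` and `Y`, whether `Y * X` still has rank `r` is detected by a pairing
`φ Y (v X) ≠ 0`: here `v X ∈ ⋀^r ℚ^d` is the wedge of a basis of the range of `X`, and `φ Y` is
the functional induced by the determinant once `Y` is factored through `ℚ^r`.

Cut the sequence greedily: the chunk starting at `X` runs up to the last `Z` with
`rank (Z * X) = r`, which makes its product stable. Every matrix after the chunk pairs to zero
with `v X`, while the last matrix of the previous chunk pairs nonzero with it, so the span of the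
functionals `φ Y` of the remaining suffix loses a dimension every two chunks. Hence there are at most
`2 * choose d r + 2 ≤ 2 ^ (d + 1)` chunks, each a factorization tree of height one, and a balanced
binary tree over them has height at most `d + 2`.
-/

open Module LinearMap

namespace LinearMap

variable {K V W : Type*} [Field K] [AddCommGroup V] [Module K V] [AddCommGroup W] [Module K W]

theorem finrank_map_eq_of_disjoint_ker {f : V →ₗ[K] W} {U : Submodule K V}
    (hU : Disjoint U (ker f)) : finrank K (U.map f) = finrank K U := by
  rw [← range_domRestrict]
  exact finrank_range_of_inj (injective_domRestrict_iff.mpr hU)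

theorem finrank_range_comp_comp_eq {V₀ V₁ : Type*} [AddCommGroup V₀] [Module K V₀]
    [AddCommGroup V₁] [Module K V₁] [FiniteDimensional K V] {f : V →ₗ[K] W} {g : V₁ →ₗ[K] V}
    (h : V₀ →ₗ[K] V₁) (hfg : finrank K (range (f ∘ₗ g)) = finrank K (range g)) :
    finrank K (range (f ∘ₗ g ∘ₗ h)) = finrank K (range (g ∘ₗ h)) := by
  have hdisj : Disjoint (range g) (ker f) :=
    Submodule.disjoint_ker_of_finrank_le f (by rw [← range_comp, hfg])
  rw [range_comp (g ∘ₗ h) f]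
  exact finrank_map_eq_of_disjoint_ker (hdisj.mono_left (range_comp_le_range h g))

theorem exists_eq_comp_injective_of_finrank_range [FiniteDimensional K V] {r : ℕ}
    (g : V →ₗ[K] W) (hg : finrank K (range g) = r) :
    ∃ (h : V →ₗ[K] (Fin r → K)) (s : (Fin r → K) →ₗ[K] W),
      Function.Injective s ∧ g = s ∘ₗ h := by
  let e : range g ≃ₗ[K] (Fin r → K) := LinearEquiv.ofFinrankEq _ _ (by simpa using hg)
  refine ⟨e ∘ₗ g.rangeRestrict, (range g).subtype ∘ₗ e.symm, ?_, ?_⟩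
  · exact (range g).injective_subtype.comp e.symm.injective
  · ext x
    simp

theorem det_ne_zero_iff_finrank_map {r : ℕ} {U : Submodule K V} (b : Basis (Fin r) K U)
    (h : V →ₗ[K] (Fin r → K)) :
    (Matrix.of fun i => h (b i)).det ≠ 0 ↔ finrank K (U.map h) = r := by
  rw [← isUnit_iff_ne_zero, ← Matrix.isUnit_iff_isUnit_det,
    ← Matrix.linearIndependent_rows_iff_isUnit, linearIndependent_iff_card_eq_finrank_span,
    Fintype.card_fin, eq_comm]
  congr! 1
  change finrank K (Submodule.span K (Set.range (h ∘ U.subtype ∘ b))) = _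
  rw [Set.range_comp, Set.range_comp, ← Submodule.map_span, ← Submodule.map_span, b.span_eq,
    Submodule.map_top, U.range_subtype]

theorem exists_wedge_pairing {V' : Type*} [AddCommGroup V'] [Module K V'] [FiniteDimensional K V]
    (r : ℕ) :
    ∃ (v : (V' →ₗ[K] V) → ⋀[K]^r V) (φ : (V →ₗ[K] W) → Dual K (⋀[K]^r V)),
      ∀ f g, finrank K (range f) = r → finrank K (range g) = r →
        (φ g (v f) ≠ 0 ↔ finrank K (range (g ∘ₗ f)) = r) := by
  have hfac : ∀ g : V →ₗ[K] W, ∃ (h : V →ₗ[K] (Fin r → K)) (s : (Fin r → K) →ₗ[K] W),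
      finrank K (range g) = r → Function.Injective s ∧ g = s ∘ₗ h := by
    intro g
    by_cases hg : finrank K (range g) = r
    · obtain ⟨h, s, hs⟩ := exists_eq_comp_injective_of_finrank_range g hg
      exact ⟨h, s, fun _ => hs⟩
    · exact ⟨0, 0, fun hg' => absurd hg' hg⟩
  choose h s hs using hfac
  classical
  refine ⟨fun f => if hf : finrank K (range f) = r then
      exteriorPower.ιMulti K r fun i => (finBasisOfFinrankEq K (range f) hf i : V) else 0,
    fun g => exteriorPower.alternatingMapLinearEquiv
      (Matrix.detRowAlternating.compLinearMap (h g)), fun f g hf hg => ?_⟩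
  obtain ⟨hs_inj, hgs⟩ := hs g hg
  have hrange : range (g ∘ₗ f) = ((range f).map (h g)).map (s g) := by
    rw [range_comp, ← Submodule.map_comp, ← hgs]
  dsimp only
  rw [dif_pos hf, exteriorPower.alternatingMapLinearEquiv_apply_ιMulti, hrange,
    finrank_map_eq_of_disjoint_ker (by simp [ker_eq_bot.mpr hs_inj])]
  exact det_ne_zero_iff_finrank_map _ (h g)

end LinearMap

namespace Matrix

variable {K : Type*} [Field K]

theorem rank_mul_mul_eq_of_rank_mul_eq {l m n o : Type*} [Fintype m] [Fintype n] [Fintype o]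
    {A : Matrix l m K} {B : Matrix m n K} (C : Matrix n o K) (h : (A * B).rank = B.rank) :
    (A * B * C).rank = (B * C).rank := by
  rw [rank, rank, mulVecLin_mul] at h
  rw [rank, rank, Matrix.mul_assoc, mulVecLin_mul, mulVecLin_mul]
  exact LinearMap.finrank_range_comp_comp_eq _ h

theorem exists_wedge_pairing {n : Type*} [Fintype n] [DecidableEq n] (r : ℕ) :
    ∃ (v : Matrix n n K → ⋀[K]^r (n → K)) (φ : Matrix n n K → Dual K (⋀[K]^r (n → K))),
      ∀ X Y : Matrix n n K, X.rank = r → Y.rank = r → (φ Y (v X) ≠ 0 ↔ (Y * X).rank = r) := by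
  obtain ⟨v, φ, hvφ⟩ := LinearMap.exists_wedge_pairing (K := K) (V := n → K) (V' := n → K)
    (W := n → K) r
  refine ⟨fun X => v X.mulVecLin, fun Y => φ Y.mulVecLin, fun X Y hX hY => ?_⟩
  rw [rank, mulVecLin_mul]
  exact hvφ _ _ hX hY

end Matrix

namespace IsFactTree

variable {d : ℕ}

theorem mono {h h' : ℕ} {ys : List (Matrix (Fin d) (Fin d) ℚ)} {M : Matrix (Fin d) (Fin d) ℚ}
    (t : IsFactTree d h ys M) (hh : h ≤ h') : IsFactTree d h' ys M := by
  induction t generalizing h' with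
  | leaf h M => exact .leaf _ _
  | node h children hne hchildren M hprod hstable ih =>
    obtain ⟨g, rfl⟩ : ∃ g, h' = g + 1 := ⟨h' - 1, by omega⟩
    exact .node g children hne (fun c hc => ih c hc (by omega)) M hprod hstable

theorem append {h : ℕ} {ys₁ ys₂ : List (Matrix (Fin d) (Fin d) ℚ)}
    {M₁ M₂ : Matrix (Fin d) (Fin d) ℚ} (t₁ : IsFactTree d h ys₁ M₁)
    (t₂ : IsFactTree d h ys₂ M₂) : IsFactTree d (h + 1) (ys₁ ++ ys₂) (M₁ * M₂) := by
  simpa using IsFactTree.node h [(ys₁, M₁), (ys₂, M₂)] (by simp)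
    (by simpa using ⟨t₁, t₂⟩) (M₁ * M₂) (by simp) (by simp)

theorem of_leaves (h : ℕ) {ys : List (Matrix (Fin d) (Fin d) ℚ)} (hne : ys ≠ [])
    (hstable : 3 ≤ ys.length → MatStable ys.prod) : IsFactTree d (h + 1) ys ys.prod := by
  simpa [Function.comp_def, ← List.flatMap_def] using
    IsFactTree.node h (ys.map fun M => ([M], M)) (by simpa using hne)
    (by simpa using fun M _ => IsFactTree.leaf h M) ys.prod (by simp [Function.comp_def])
    (by simpa using hstable)

theorem exists_of_length_le_two_pow {h : ℕ} (t : ℕ)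
    (cs : List (List (Matrix (Fin d) (Fin d) ℚ))) (hne : cs ≠ []) (hlen : cs.length ≤ 2 ^ t)
    (hcs : ∀ c ∈ cs, ∃ M, IsFactTree d h c M) :
    ∃ M, IsFactTree d (h + t) cs.flatten M := by
  induction t generalizing cs with
  | zero =>
    obtain ⟨c, rfl⟩ := List.length_eq_one_iff.mp
      (le_antisymm hlen (List.length_pos_iff.mpr hne))
    simpa using hcs c (by simp)
  | succ t ih =>
    by_cases hsmall : cs.length ≤ 2 ^ t
    · obtain ⟨M, hM⟩ := ih cs hne hsmall hcs
      exact ⟨M, hM.mono (by omega)⟩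
    · have hpos : 0 < 2 ^ t := Nat.two_pow_pos t
      obtain ⟨M₁, t₁⟩ := ih (cs.take (2 ^ t)) (by simp; omega) (by simp)
        (fun c hc => hcs c (List.mem_of_mem_take hc))
      obtain ⟨M₂, t₂⟩ := ih (cs.drop (2 ^ t)) (by simp; omega) (by simp; omega)
        (fun c hc => hcs c (List.mem_of_mem_drop hc))
      refine ⟨M₁ * M₂, ?_⟩
      rw [← add_assoc, ← List.take_append_drop (2 ^ t) cs, List.flatten_append]
      exact t₁.append t₂

end IsFactTree

section RankSequence

variable {d r : ℕ}

def IsRankSeq (r : ℕ) (Ms : List (Matrix (Fin d) (Fin d) ℚ)) : Prop :=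
  (∀ M ∈ Ms, M.rank = r) ∧ Ms.prod.rank = r

theorem IsRankSeq.infix {Ms Ns : List (Matrix (Fin d) (Fin d) ℚ)} (h : IsRankSeq r Ms)
    (hN : Ns <:+: Ms) (hne : Ns ≠ []) : IsRankSeq r Ns := by
  obtain ⟨s, t, rfl⟩ := hN
  obtain ⟨M, Ns, rfl⟩ := List.exists_cons_of_ne_nil hne
  refine ⟨fun N hN => h.1 N (List.mem_append_left _ (List.mem_append_right _ hN)),
    le_antisymm ?_ ?_⟩
  · calc (M :: Ns).prod.rank ≤ M.rank := by
          rw [List.prod_cons]; exact Matrix.rank_mul_le_left _ _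
      _ = r := h.1 M (by simp)
  · calc r = (s.prod * (M :: Ns).prod * t.prod).rank := by
          rw [← h.2, List.prod_append, List.prod_append]
      _ ≤ (M :: Ns).prod.rank :=
          (Matrix.rank_mul_le_left _ _).trans (Matrix.rank_mul_le_right _ _)

theorem IsRankSeq.rank_mul_of_infix {Ms : List (Matrix (Fin d) (Fin d) ℚ)}
    {Y X : Matrix (Fin d) (Fin d) ℚ} (h : IsRankSeq r Ms) (hYX : [Y, X] <:+: Ms) :
    (Y * X).rank = r := by
  simpa using (h.infix hYX (by simp)).2

theorem matStable_mul_mul_of_rank_mul_eq {X Q Z : Matrix (Fin d) (Fin d) ℚ} (hX : X.rank = r)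
    (hZ : Z.rank = r) (hXQZ : (X * Q * Z).rank = r) (hZX : (Z * X).rank = r) :
    MatStable (X * Q * Z) := by
  have hXQ_Z : (X * Q * Z).rank = Z.rank := by rw [hXQZ, hZ]
  have hZ_X : (Z * X).rank = X.rank := by rw [hZX, hX]
  calc (X * Q * Z).rank = (X * (Q * Z)).rank := by rw [Matrix.mul_assoc]
    _ = (Z * X * (Q * Z)).rank := (Matrix.rank_mul_mul_eq_of_rank_mul_eq _ hZ_X).symm
    _ = (Z * (X * Q * Z)).rank := by simp only [Matrix.mul_assoc]
    _ = (X * Q * Z * (X * Q * Z)).rank := (Matrix.rank_mul_mul_eq_of_rank_mul_eq _ hXQ_Z).symm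

theorem IsRankSeq.exists_chunk {X : Matrix (Fin d) (Fin d) ℚ}
    {rest : List (Matrix (Fin d) (Fin d) ℚ)} (h : IsRankSeq r (X :: rest)) :
    ∃ C L, rest = C ++ L ∧ (∃ M, IsFactTree d 1 (X :: C) M) ∧ ∀ Y ∈ L, (Y * X).rank ≠ r := by
  classical
  let p : Matrix (Fin d) (Fin d) ℚ → Bool := fun Y => (Y * X).rank ≠ r
  refine ⟨rest.rdropWhile p, rest.rtakeWhile p, List.rdropWhile_append_rtakeWhile.symm,
    ⟨_, IsFactTree.of_leaves 0 (List.cons_ne_nil _ _) fun hlen => ?_⟩,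
    fun Y hY => by simpa [p] using List.mem_rtakeWhile_imp hY⟩
  have hne : rest.rdropWhile p ≠ [] := by
    rintro h0
    simp [h0] at hlen
  obtain ⟨Q, Z, hQZ, hZX⟩ : ∃ Q Z, rest.rdropWhile p = Q ++ [Z] ∧ (Z * X).rank = r :=
    ⟨_, _, (List.dropLast_append_getLast hne).symm,
      by simpa [p] using List.rdropWhile_last_not p rest hne⟩
  have hseq : IsRankSeq r (X :: (Q ++ [Z])) := by
    refine h.infix (List.IsPrefix.isInfix ⟨rest.rtakeWhile p, ?_⟩) (List.cons_ne_nil _ _)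
    rw [← hQZ, List.cons_append, List.rdropWhile_append_rtakeWhile]
  rw [hQZ, show (X :: (Q ++ [Z])).prod = X * Q.prod * Z by simp [Matrix.mul_assoc]]
  refine matStable_mul_mul_of_rank_mul_eq (hseq.1 X (by simp)) (hseq.1 Z (by simp))
    (by simpa [Matrix.mul_assoc] using hseq.2) hZX

end RankSequence

section Chunking

variable {d r : ℕ} {W : Type*} [AddCommGroup W] [Module ℚ W] [FiniteDimensional ℚ W]
  (v : Matrix (Fin d) (Fin d) ℚ → W) (φ : Matrix (Fin d) (Fin d) ℚ → Dual ℚ W)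
  (hvφ : ∀ X Y : Matrix (Fin d) (Fin d) ℚ, X.rank = r → Y.rank = r →
    (φ Y (v X) ≠ 0 ↔ (Y * X).rank = r))
include hvφ

theorem IsRankSeq.finrank_span_image_lt_of_rank_mul_ne {Ms Ns : List (Matrix (Fin d) (Fin d) ℚ)}
    {Z X : Matrix (Fin d) (Fin d) ℚ} (h : IsRankSeq r Ms) (hZX : [Z, X] <:+: Ms) (hNs : Ns ⊆ Ms)
    (hrank : ∀ Y ∈ Ns, (Y * X).rank ≠ r) :
    finrank ℚ (Submodule.span ℚ (φ '' {Y | Y ∈ Ns})) <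
      finrank ℚ (Submodule.span ℚ (φ '' {Y | Y ∈ Ms})) := by
  have hZ : Z ∈ Ms := hZX.subset (by simp)
  have hX : X ∈ Ms := hZX.subset (by simp)
  have hNs_le : Submodule.span ℚ (φ '' {Y | Y ∈ Ns}) ≤ ker (Dual.eval ℚ W (v X)) := by
    refine Submodule.span_le.mpr ?_
    rintro _ ⟨Y, hY, rfl⟩
    by_contra hne
    exact hrank Y hY ((hvφ X Y (h.1 X hX) (h.1 Y (hNs hY))).mp hne)
  have hZ_notin : φ Z ∉ Submodule.span ℚ (φ '' {Y | Y ∈ Ns}) := fun hmem =>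
    (hvφ X Z (h.1 X hX) (h.1 Z hZ)).mpr (h.rank_mul_of_infix hZX) (hNs_le hmem)
  refine Submodule.finrank_lt_finrank_of_lt (lt_of_le_of_ne ?_ ?_)
  · exact Submodule.span_mono (Set.image_mono fun Y hY => hNs hY)
  · rintro heq
    exact hZ_notin (heq ▸ Submodule.subset_span ⟨Z, hZ, rfl⟩)

theorem IsRankSeq.exists_chunking (Ms : List (Matrix (Fin d) (Fin d) ℚ)) (h : IsRankSeq r Ms)
    (hne : Ms ≠ []) :
    ∃ cs : List (List (Matrix (Fin d) (Fin d) ℚ)), cs.flatten = Ms ∧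
      (∀ c ∈ cs, ∃ M, IsFactTree d 1 c M) ∧
      cs.length ≤ 2 * finrank ℚ (Submodule.span ℚ (φ '' {Y | Y ∈ Ms})) + 2 := by
  induction hlen : Ms.length using Nat.strong_induction_on generalizing Ms with | _ n ih =>
  obtain ⟨X, rest, rfl⟩ := List.exists_cons_of_ne_nil hne
  obtain ⟨C, L, rfl, hC, hL⟩ := h.exists_chunk
  rcases L with _ | ⟨X', rest'⟩
  · exact ⟨[X :: C], by simp, by simpa using hC, by simp⟩
  have h' : IsRankSeq r (X' :: rest') :=
    h.infix ⟨X :: C, [], by simp⟩ (List.cons_ne_nil _ _)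
  obtain ⟨C', L', rfl, hC', hL'⟩ := h'.exists_chunk
  rcases eq_or_ne L' [] with rfl | hL'_ne
  · exact ⟨[X :: C, X' :: C'], by simp, by simp [hC, hC'], by simp⟩
  have hsuff : L' <:+: X :: (C ++ X' :: (C' ++ L')) := ⟨X :: C ++ X' :: C', [], by simp⟩
  obtain ⟨cs, rfl, hcs, hcount⟩ :=
    ih L'.length (by simp at hlen; omega) L' (h.infix hsuff hL'_ne) hL'_ne rfl
  have hZX : [(X :: C).getLast (List.cons_ne_nil X C), X'] <:+:
      X :: (C ++ X' :: (C' ++ cs.flatten)) :=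
    ⟨(X :: C).dropLast, C' ++ cs.flatten, by
      conv_rhs => rw [← List.cons_append, ← List.dropLast_append_getLast (List.cons_ne_nil X C)]
      simp⟩
  have hdrop := h.finrank_span_image_lt_of_rank_mul_ne v φ hvφ hZX hsuff.subset hL'
  refine ⟨(X :: C) :: (X' :: C') :: cs, by simp, ?_, by simp; omega⟩
  rintro c (_ | ⟨_, _ | ⟨_, hc⟩⟩)
  exacts [hC, hC', hcs c hc]

end Chunking

theorem rank_r_sequence_factorization_tree_general (d r : ℕ) (hd : 1 ≤ d)
    (Ms : List (Matrix (Fin d) (Fin d) ℚ)) (hne : Ms ≠ [])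
    (hrank : ∀ M ∈ Ms, M.rank = r) (hprod : Ms.prod.rank = r) :
    ∃ M, IsFactTree d (d + 2) Ms M := by
  obtain ⟨v, φ, hvφ⟩ := Matrix.exists_wedge_pairing (K := ℚ) (n := Fin d) r
  obtain ⟨cs, rfl, hcs, hcount⟩ := IsRankSeq.exists_chunking v φ hvφ Ms ⟨hrank, hprod⟩ hne
  have hdim : finrank ℚ (Submodule.span ℚ (φ '' {Y | Y ∈ cs.flatten})) < 2 ^ d :=
    calc _ ≤ finrank ℚ (Dual ℚ (⋀[ℚ]^r (Fin d → ℚ))) := Submodule.finrank_le _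
      _ = d.choose r := by
        rw [Subspace.dual_finrank_eq, exteriorPower.finrank_eq, finrank_fin_fun]
      _ < 2 ^ d := Nat.choose_lt_two_pow d r hd
  have hcs_ne : cs ≠ [] := by
    rintro rfl
    exact hne rfl
  rw [show d + 2 = 1 + (d + 1) by omega]
  exact IsFactTree.exists_of_length_le_two_pow (d + 1) cs hcs_ne (by rw [pow_succ]; omega) hcs

/-- Every rank-`r` sequence of matrices in `M_d(ℚ)` (each matrix has rank `r` and the
product of the sequence has rank `r`), with `d ≥ 1` and `r ≤ d`, is the yield of some
factorization tree of height at most `d + 2`. -/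
theorem rank_r_sequence_factorization_tree (d r : ℕ) (hd : 1 ≤ d) (hr : r ≤ d)
    (Ms : List (Matrix (Fin d) (Fin d) ℚ)) (hne : Ms ≠ [])
    (hrank : ∀ M ∈ Ms, M.rank = r) (hprod : Ms.prod.rank = r) :
    ∃ M, IsFactTree d (d + 2) Ms M :=
  rank_r_sequence_factorization_tree_general d r hd Ms hne hrank hprod
end

section
/- Let M_1, …, M_m be a rank-r sequence of matrices in M_d(ℚ) such that im(M_1) ∩ ker(M_m) = {0}. Then the product P = M_1 M_2 ⋯ M_m is stable; that is, im(P) ∩ ker(P) = {0} and rank(P) = rank(P²). -/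
/-!
Since `P = M₁ * (M₂ ⋯ Mₘ) = (M₁ ⋯ Mₘ₋₁) * Mₘ` and all three of `P`, `M₁`, `Mₘ` have rank `r`,
the inclusions `im P ≤ im M₁` and `ker Mₘ ≤ ker P` are equalities by counting dimensions.
Hence `im P ∩ ker P = im M₁ ∩ ker Mₘ = 0`, so `P` is injective on `im P` and
`im P² = P (im P)` has the same dimension as `im P`.
-/

open LinearMap Module

theorem LinearMap.finrank_range_comp_of_disjoint {K V W U : Type*} [Field K]
    [AddCommGroup V] [Module K V] [AddCommGroup W] [Module K W] [AddCommGroup U] [Module K U]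
    [FiniteDimensional K V] (f : V →ₗ[K] W) (g : W →ₗ[K] U)
    (h : Disjoint (range f) (ker g)) :
    finrank K (range (g ∘ₗ f)) = finrank K (range f) := by
  have hinj : Function.Injective (g.domRestrict (range f)) :=
    injective_domRestrict_iff.mpr h
  rw [range_comp, ← range_domRestrict]
  exact finrank_range_of_inj hinj

namespace Matrix

variable {K m n o : Type*} [Field K] [Fintype n] [Fintype o]

theorem range_mulVecLin_mul_eq_of_rank_eq (A : Matrix m n K) (B : Matrix n o K)
    (h : (A * B).rank = A.rank) :
    range (A * B).mulVecLin = range A.mulVecLin := by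
  unfold rank at h
  rw [mulVecLin_mul] at h ⊢
  exact Submodule.eq_of_le_of_finrank_eq (range_comp_le_range _ _) h

theorem ker_mulVecLin_mul_eq_of_rank_eq (A : Matrix m n K) (B : Matrix n o K)
    (h : (A * B).rank = B.rank) :
    ker (A * B).mulVecLin = ker B.mulVecLin := by
  have hAB := finrank_range_add_finrank_ker (A * B).mulVecLin
  have hB := finrank_range_add_finrank_ker B.mulVecLin
  unfold rank at h
  rw [mulVecLin_mul] at h hAB ⊢
  refine (Submodule.eq_of_le_of_finrank_eq (ker_le_ker_comp _ _) ?_).symm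
  omega

theorem rank_mul_self_eq_of_disjoint (P : Matrix n n K)
    (h : Disjoint (range P.mulVecLin) (ker P.mulVecLin)) :
    (P * P).rank = P.rank := by
  rw [rank, mulVecLin_mul]
  exact finrank_range_comp_of_disjoint _ _ h

end Matrix

/-- Let `M₁, …, Mₘ` be a rank-`r` sequence of matrices in `M_d(ℚ)` (each matrix has
rank `r` and the product has rank `r`) such that `im(M₁) ∩ ker(Mₘ) = {0}`.  Then the
product `P = M₁ ⋯ Mₘ` is stable: `im(P) ∩ ker(P) = {0}` and `rank P = rank P²`. -/
theorem rank_r_sequence_product_stable (d r : ℕ)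
    (Ms : List (Matrix (Fin d) (Fin d) ℚ)) (hne : Ms ≠ [])
    (hrank : ∀ M ∈ Ms, M.rank = r) (hprod : Ms.prod.rank = r)
    (hik : LinearMap.range (Ms.head hne).mulVecLin ⊓
        LinearMap.ker (Ms.getLast hne).mulVecLin = ⊥) :
    LinearMap.range Ms.prod.mulVecLin ⊓ LinearMap.ker Ms.prod.mulVecLin = ⊥ ∧
    Ms.prod.rank = (Ms.prod * Ms.prod).rank := by
  have hsplit_head : Ms.prod = Ms.head hne * Ms.tail.prod := by
    rw [← List.prod_cons, List.cons_head_tail]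
  have hsplit_last : Ms.prod = Ms.dropLast.prod * Ms.getLast hne := by
    rw [← List.prod_concat, List.concat_eq_append, List.dropLast_append_getLast]
  have hrange : range Ms.prod.mulVecLin = range (Ms.head hne).mulVecLin := by
    rw [hsplit_head] at hprod ⊢
    exact Matrix.range_mulVecLin_mul_eq_of_rank_eq _ _ <| by
      rw [hprod, hrank _ (List.head_mem hne)]
  have hker : ker Ms.prod.mulVecLin = ker (Ms.getLast hne).mulVecLin := by
    rw [hsplit_last] at hprod ⊢
    exact Matrix.ker_mulVecLin_mul_eq_of_rank_eq _ _ <| by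
      rw [hprod, hrank _ (List.getLast_mem hne)]
  have hdisj : range Ms.prod.mulVecLin ⊓ ker Ms.prod.mulVecLin = ⊥ := by
    rw [hrange, hker, hik]
  exact ⟨hdisj, (Matrix.rank_mul_self_eq_of_disjoint _ (disjoint_iff.mpr hdisj)).symm⟩
end

section
/- For every word w ∈ Σ*: (i) if ω(w) = η(d), then there exists a factor u of w such that ω(u) > 0 and φ(u) is stable; (ii) if ω(w) = −η(d), then there exists a factor u of w such that ω(u) < 0 and φ(u) is stable. -/
/-- Threshold `η(d) = 2^(d(d+3)) + 1`. -/
def eta (d : ℕ) : ℤ := 2 ^ (d * (d + 3)) + 1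

set_option linter.unusedSectionVars false

namespace StableAux

open Module Submodule LinearMap

variable {V : Type} [AddCommGroup V] [Module ℚ V] [FiniteDimensional ℚ V]

/-- Product of the endomorphisms `A i, A (i+1), ..., A (j-1)` (in this order). -/
noncomputable def ppE (A : ℕ → Module.End ℚ V) (i j : ℕ) : Module.End ℚ V :=
  ((List.range (j - i)).map fun t => A (i + t)).prod

lemma ppE_same (A : ℕ → Module.End ℚ V) (i : ℕ) : ppE A i i = 1 := by
  simp [ppE]

lemma ppE_succ (A : ℕ → Module.End ℚ V) {i j : ℕ} (h : i ≤ j) :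
    ppE A i (j + 1) = ppE A i j * A j := by
  unfold ppE
  rw [show j + 1 - i = (j - i) + 1 from by omega, List.range_succ, List.map_append,
    List.prod_append, List.map_singleton, List.prod_singleton,
    show i + (j - i) = j from by omega]

lemma ppE_split (A : ℕ → Module.End ℚ V) {i j k : ℕ} (h1 : i ≤ j) (h2 : j ≤ k) :
    ppE A i k = ppE A i j * ppE A j k := by
  induction k, h2 using Nat.le_induction with
  | base => rw [ppE_same, mul_one]
  | succ k hk ih => rw [ppE_succ A (h1.trans hk), ppE_succ A hk, ih, mul_assoc]

lemma ppE_single (A : ℕ → Module.End ℚ V) (j : ℕ) : ppE A j (j + 1) = A j := by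
  rw [ppE_succ A (le_refl j), ppE_same, one_mul]

/-- Stability for an endomorphism, in kernel-range form. -/
def NStab (f : Module.End ℚ V) : Prop :=
  LinearMap.ker f ⊓ LinearMap.range f = ⊥

lemma nstab_of_ker_eq_bot {f : Module.End ℚ V} (h : LinearMap.ker f = ⊥) : NStab f := by
  rw [NStab, h, bot_inf_eq]

lemma ker_sq_of_nstab {f : Module.End ℚ V} (h : NStab f) :
    LinearMap.ker (f * f) = LinearMap.ker f := by
  apply le_antisymm
  · intro x hx
    have hfx : f x ∈ LinearMap.ker f ⊓ LinearMap.range f :=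
      ⟨by simpa [LinearMap.mem_ker, Module.End.mul_apply] using hx, ⟨x, rfl⟩⟩
    rw [h] at hfx
    simpa [LinearMap.mem_ker] using hfx
  · intro x hx
    simp only [LinearMap.mem_ker] at hx ⊢
    rw [Module.End.mul_apply, hx, map_zero]

lemma ker_le_ker_mul (f g : Module.End ℚ V) :
    LinearMap.ker g ≤ LinearMap.ker (f * g) := by
  intro x hx
  simp only [LinearMap.mem_ker] at hx ⊢
  rw [Module.End.mul_apply, hx, map_zero]

lemma rk_mul_le_left (f g : Module.End ℚ V) :
    finrank ℚ (LinearMap.range (f * g)) ≤ finrank ℚ (LinearMap.range f) :=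
  Submodule.finrank_mono (by rw [Module.End.mul_eq_comp]; exact LinearMap.range_comp_le_range _ _)

lemma rk_mul_le_right (f g : Module.End ℚ V) :
    finrank ℚ (LinearMap.range (f * g)) ≤ finrank ℚ (LinearMap.range g) := by
  rw [Module.End.mul_eq_comp, LinearMap.range_comp]
  exact Submodule.finrank_map_le _ _


section Geometry

open ExteriorAlgebra

variable (b : Basis (Fin (finrank ℚ V)) ℚ V)

/-- The wedge of the (sorted) basis vectors indexed by a finite set `S`. -/
noncomputable def wedgeOf (S : Finset (Fin (finrank ℚ V))) : ExteriorAlgebra ℚ V :=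
  ExteriorAlgebra.ιMulti ℚ S.card fun a => b ((S.orderIsoOfFin rfl a : Fin (finrank ℚ V)))

lemma wedgeOf_eq (S : Finset (Fin (finrank ℚ V))) {p : ℕ} (hc : S.card = p) :
    wedgeOf b S = ExteriorAlgebra.ιMulti ℚ p fun a => b ((S.orderIsoOfFin hc a : Fin (finrank ℚ V))) := by
  subst hc; rfl

lemma iotaMulti_mul (p q : ℕ) (x : Fin p → V) (z : Fin q → V) :
    (ExteriorAlgebra.ιMulti ℚ p x) * (ExteriorAlgebra.ιMulti ℚ q z) =
      ExteriorAlgebra.ιMulti ℚ (p + q) (Fin.append x z) := by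
  rw [ExteriorAlgebra.ιMulti_apply, ExteriorAlgebra.ιMulti_apply, ExteriorAlgebra.ιMulti_apply,
    ← List.prod_append]
  congr 1
  rw [List.ofFn_add]
  congr 1 <;> simp [Fin.append_left, Fin.append_right]

lemma iotaMulti_congr {p q : ℕ} (h : q = p) (x : Fin p → V) :
    ExteriorAlgebra.ιMulti ℚ p x = ExteriorAlgebra.ιMulti ℚ q fun a => x (Fin.cast h a) := by
  subst h; rfl

lemma wedge_mem_span (p : ℕ) (x : Fin p → V) :
    ExteriorAlgebra.ιMulti ℚ p x ∈ Submodule.span ℚ (Set.range (wedgeOf b)) := by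
  classical
  set W := Submodule.span ℚ (Set.range (wedgeOf b)) with hW
  have hx : x = fun a => ∑ i, b.repr (x a) i • b i :=
    funext fun a => (b.sum_repr (x a)).symm
  rw [hx]
  have hexp := (ExteriorAlgebra.ιMulti ℚ p (M := V)).toMultilinearMap.map_sum_finset
    (g := fun a i => b.repr (x a) i • b i) (A := fun _ => Finset.univ)
  rw [show ((ExteriorAlgebra.ιMulti ℚ p (M := V)).toMultilinearMap : (Fin p → V) → ExteriorAlgebra ℚ V)
      = ⇑(ExteriorAlgebra.ιMulti ℚ p (M := V)) from rfl] at hexp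
  rw [hexp]
  apply Submodule.sum_mem
  intro σ _
  have hsm := (ExteriorAlgebra.ιMulti ℚ p (M := V)).toMultilinearMap.map_smul_univ
    (fun a => b.repr (x a) (σ a)) (fun a => b (σ a))
  rw [show ((ExteriorAlgebra.ιMulti ℚ p (M := V)).toMultilinearMap : (Fin p → V) → ExteriorAlgebra ℚ V)
      = ⇑(ExteriorAlgebra.ιMulti ℚ p (M := V)) from rfl] at hsm
  rw [hsm]
  apply Submodule.smul_mem
  by_cases hinj : Function.Injective σ
  · -- reorder to a sorted wedge
    set S : Finset (Fin (finrank ℚ V)) := Finset.image σ Finset.univ with hS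
    have hc : S.card = p := by
      rw [hS, Finset.card_image_of_injective _ hinj, Finset.card_univ, Fintype.card_fin]
    have hmem : ∀ a : Fin p, σ a ∈ S := fun a => Finset.mem_image_of_mem σ (Finset.mem_univ a)
    set toS : Fin p → S := fun a => ⟨σ a, hmem a⟩ with htoS
    have htoSinj : Function.Injective toS := by
      intro a a' h
      exact hinj (congrArg Subtype.val h)
    have hbij : Function.Bijective toS := by
      rw [Fintype.bijective_iff_injective_and_card]
      exact ⟨htoSinj, by rw [Fintype.card_coe, hc, Fintype.card_fin]⟩
    set e : Fin p ≃ S := Equiv.ofBijective toS hbij with he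
    set π : Equiv.Perm (Fin p) := e.trans (S.orderIsoOfFin hc).toEquiv.symm with hπ
    have hkey : (fun a => b (σ a)) = (fun a => b ((S.orderIsoOfFin hc a : Fin (finrank ℚ V)))) ∘ π := by
      funext a
      have : (S.orderIsoOfFin hc) (π a) = e a := by
        simp [hπ]
      simp only [Function.comp_apply, this]
      have : ((e a : S) : Fin (finrank ℚ V)) = σ a := by
        simp [he, Equiv.ofBijective_apply, htoS]
      rw [this]
    rw [hkey]
    rw [(ExteriorAlgebra.ιMulti ℚ p (M := V)).map_perm _ π]
    have hw : ExteriorAlgebra.ιMulti ℚ p (fun a => b ((S.orderIsoOfFin hc a : Fin (finrank ℚ V))))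
        = wedgeOf b S := (wedgeOf_eq b S hc).symm
    rw [hw]
    have hWS : wedgeOf b S ∈ W := Submodule.subset_span ⟨S, rfl⟩
    rcases Int.units_eq_one_or (Equiv.Perm.sign π) with h1 | h1
    · rw [h1, one_smul]; exact hWS
    · rw [h1, Units.smul_def]
      have hns : ((-1 : ℤˣ) : ℤ) • wedgeOf b S = -(wedgeOf b S) := by norm_num
      rw [hns]
      exact Submodule.neg_mem _ hWS
  · -- a repeated entry: the wedge vanishes
    rw [Function.not_injective_iff] at hinj
    obtain ⟨a, a', hval, hne⟩ := hinj
    rw [(ExteriorAlgebra.ιMulti ℚ p (M := V)).map_eq_zero_of_eq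
      (fun a => b (σ a)) (show b (σ a) = b (σ a') by rw [hval]) hne]
    exact Submodule.zero_mem _

lemma geom (r m : ℕ)
    (b : Basis (Fin (finrank ℚ V)) ℚ V)
    (ι κ : Fin m → Submodule ℚ V)
    (hι : ∀ t, finrank ℚ (ι t) = r)
    (hκ : ∀ t, finrank ℚ (κ t) = finrank ℚ V - r)
    (hrD : r ≤ finrank ℚ V)
    (htrans : ∀ t, ι t ⊓ κ t = ⊥)
    (hmeet : ∀ t t', t < t' → ι t ⊓ κ t' ≠ ⊥) :
    m ≤ 2 ^ (finrank ℚ V) := by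
  classical
  set s : ℕ := finrank ℚ V - r with hs
  have hrs : r + s = finrank ℚ V := by omega
  -- bases of the subspaces
  set uB : ∀ t, Basis (Fin r) ℚ (ι t) :=
    fun t => (Module.finBasis ℚ (ι t)).reindex (finCongr (hι t)) with huB
  set u : Fin m → Fin r → V := fun t a => ((uB t a : ι t) : V) with hu
  set vB : ∀ t, Basis (Fin s) ℚ (κ t) :=
    fun t => (Module.finBasis ℚ (κ t)).reindex (finCongr (hκ t)) with hvB
  set v : Fin m → Fin s → V := fun t a => ((vB t a : κ t) : V) with hv
  have hu_li : ∀ t, LinearIndependent ℚ (u t) := fun t =>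
    (uB t).linearIndependent.map' (ι t).subtype (Submodule.ker_subtype _)
  have hv_li : ∀ t, LinearIndependent ℚ (v t) := fun t =>
    (vB t).linearIndependent.map' (κ t).subtype (Submodule.ker_subtype _)
  have hu_span : ∀ t, Submodule.span ℚ (Set.range (u t)) = ι t := by
    intro t
    have h1 : Set.range (u t) = (ι t).subtype '' Set.range (uB t) := by
      rw [← Set.range_comp]; rfl
    rw [h1, ← Submodule.map_span, (uB t).span_eq, Submodule.map_top, Submodule.range_subtype]
  have hv_span : ∀ t, Submodule.span ℚ (Set.range (v t)) = κ t := by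
    intro t
    have h1 : Set.range (v t) = (κ t).subtype '' Set.range (vB t) := by
      rw [← Set.range_comp]; rfl
    rw [h1, ← Submodule.map_span, (vB t).span_eq, Submodule.map_top, Submodule.range_subtype]
  -- the determinant functional on the exterior algebra
  set Dt : V [⋀^Fin (r + s)]→ₗ[ℚ] ℚ := b.det.domDomCongr (finCongr hrs.symm) with hDt
  set famF : ∀ i : ℕ, V [⋀^Fin i]→ₗ[ℚ] ℚ :=
    fun i => if h : i = r + s then Dt.domDomCongr (finCongr h.symm) else 0 with hfamF
  set F : ExteriorAlgebra ℚ V →ₗ[ℚ] ℚ := ExteriorAlgebra.liftAlternating famF with hF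
  have hFeval : ∀ z : Fin (r + s) → V,
      F (ExteriorAlgebra.ιMulti ℚ (r + s) z) = Dt z := by
    intro z
    rw [hF, ExteriorAlgebra.liftAlternating_apply_ιMulti]
    have hfam : famF (r + s) = Dt := by
      rw [hfamF]
      simp only [dif_pos]
      rw [finCongr_refl, AlternatingMap.domDomCongr_refl]
    rw [hfam]
  -- wedges
  set ω : Fin m → ExteriorAlgebra ℚ V := fun t => ExteriorAlgebra.ιMulti ℚ r (u t) with hω
  set τ : Fin m → ExteriorAlgebra ℚ V := fun t => ExteriorAlgebra.ιMulti ℚ s (v t) with hτ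
  have hg : ∀ t t', F (ω t * τ t') = Dt (Fin.append (u t) (v t')) := by
    intro t t'
    rw [hω, hτ]
    simp only []
    rw [iotaMulti_mul r s (u t) (v t'), hFeval]
  have happ_sum : ∀ (t t' : Fin m),
      (Fin.append (u t) (v t')) ∘ finSumFinEquiv = Sum.elim (u t) (v t') := by
    intro t t'; funext a
    cases a with
    | inl a => simp [Fin.append_left]
    | inr a => simp [Fin.append_right]
  -- strictly upper entries vanish
  have hg0 : ∀ t t', t < t' → F (ω t * τ t') = 0 := by
    intro t t' htt
    rw [hg]
    refine AlternatingMap.map_linearDependent Dt _ ?_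
    intro hLI
    obtain ⟨x, hx, hx0⟩ := Submodule.exists_mem_ne_zero_of_ne_bot (hmeet t t' htt)
    have hLIsum : LinearIndependent ℚ (Sum.elim (u t) (v t')) := by
      rw [← happ_sum t t']
      exact hLI.comp _ finSumFinEquiv.injective
    obtain ⟨-, -, hdisj⟩ := linearIndependent_sum.mp hLIsum
    simp only [Sum.elim_comp_inl, Sum.elim_comp_inr] at hdisj
    rw [hu_span, hv_span] at hdisj
    exact hx0 (Submodule.disjoint_def.mp hdisj x (Submodule.mem_inf.mp hx).1
      (Submodule.mem_inf.mp hx).2)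
  -- diagonal entries do not vanish
  have hgd : ∀ t, F (ω t * τ t) ≠ 0 := by
    intro t
    rw [hg]
    have hdisj : Disjoint (ι t) (κ t) := disjoint_iff.mpr (htrans t)
    have hLIsum : LinearIndependent ℚ (Sum.elim (u t) (v t)) :=
      linearIndependent_sum.mpr ⟨hu_li t, hv_li t, by
        simp only [Sum.elim_comp_inl, Sum.elim_comp_inr]
        rw [hu_span, hv_span]; exact hdisj⟩
    have hLI : LinearIndependent ℚ (Fin.append (u t) (v t)) := by
      have h2 := hLIsum.comp finSumFinEquiv.symm finSumFinEquiv.symm.injective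
      have he : Sum.elim (u t) (v t) ∘ ⇑finSumFinEquiv.symm = Fin.append (u t) (v t) := by
        rw [← happ_sum t t]
        funext a
        simp
      rwa [he] at h2
    have hspan : Submodule.span ℚ (Set.range (Fin.append (u t) (v t))) = ⊤ := by
      have hr1 : Set.range (Fin.append (u t) (v t)) = Set.range (Sum.elim (u t) (v t)) := by
        rw [← happ_sum t t, Set.range_comp, Equiv.range_eq_univ, Set.image_univ]
      rw [hr1, Set.Sum.elim_range, Submodule.span_union, hu_span, hv_span]
      have hfr := Submodule.finrank_sup_add_finrank_inf_eq (ι t) (κ t)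
      rw [htrans t, finrank_bot, hι t, hκ t] at hfr
      exact Submodule.eq_top_of_finrank_eq (by omega)
    set wc : Fin (finrank ℚ V) → V :=
      (Fin.append (u t) (v t)) ∘ (finCongr hrs.symm) with hwc
    have hwLI : LinearIndependent ℚ wc := hLI.comp _ (finCongr hrs.symm).injective
    have hwspan : ⊤ ≤ Submodule.span ℚ (Set.range wc) := by
      rw [hwc, Set.range_comp, Equiv.range_eq_univ, Set.image_univ, hspan]
    set b2 : Basis (Fin (finrank ℚ V)) ℚ V := Basis.mk hwLI hwspan with hb2
    have hDtapp : Dt (Fin.append (u t) (v t)) = b.det wc := rfl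
    have hwcb2 : wc = ⇑b2 := (Basis.coe_mk _ _).symm
    rw [hDtapp, hwcb2]
    intro h0
    have hmul := Basis.toMatrix_mul_toMatrix_flip b b2
    rw [Basis.det_apply] at h0
    have hdet := congrArg Matrix.det hmul
    rw [Matrix.det_mul, Matrix.det_one, h0, zero_mul] at hdet
    exact zero_ne_one hdet
  -- triangular independence
  have hind : LinearIndependent ℚ ω := by
    rw [Fintype.linearIndependent_iff]
    intro cf hsum
    by_contra hne
    push_neg at hne
    obtain ⟨t0, ht0⟩ := hne
    have hS0ne : (Finset.univ.filter (fun t => cf t ≠ 0)).Nonempty := ⟨t0, by simp [ht0]⟩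
    obtain ⟨k, hkmem, hkmax⟩ := Finset.exists_max_image
      (Finset.univ.filter (fun t => cf t ≠ 0)) (fun t => t) hS0ne
    have hkne : cf k ≠ 0 := by
      have := Finset.mem_filter.mp hkmem
      exact this.2
    have hz : F ((∑ t, cf t • ω t) * τ k) = 0 := by rw [hsum, zero_mul, map_zero]
    rw [Finset.sum_mul] at hz
    have hterm : ∀ t : Fin m, (cf t • ω t) * τ k = cf t • (ω t * τ k) := fun t =>
      smul_mul_assoc _ _ _
    simp_rw [hterm, map_sum, map_smul] at hz
    have hsingle : (∑ t, cf t • F (ω t * τ k)) = cf k • F (ω k * τ k) := by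
      apply Finset.sum_eq_single
      · intro t _ htk
        rcases lt_or_gt_of_ne htk with h | h
        · rw [hg0 t k h, smul_zero]
        · have hcf : cf t = 0 := by
            by_contra hc
            have := hkmax t (Finset.mem_filter.mpr ⟨Finset.mem_univ t, hc⟩)
            exact absurd this (not_le.mpr h)
          rw [hcf, zero_smul]
      · intro habs; exact absurd (Finset.mem_univ k) habs
    rw [hsingle] at hz
    rcases smul_eq_zero.mp hz with h | h
    · exact hkne h
    · exact hgd k h
  -- conclude via the span of subset wedges
  have hmem : ∀ t, ω t ∈ Submodule.span ℚ (Set.range (wedgeOf b)) := fun t =>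
    wedge_mem_span b r (u t)
  set W := Submodule.span ℚ (Set.range (wedgeOf b)) with hWdef
  have hfd : FiniteDimensional ℚ W := FiniteDimensional.span_of_finite ℚ (Set.finite_range _)
  set ω' : Fin m → W := fun t => ⟨ω t, hmem t⟩ with hω'
  have hind' : LinearIndependent ℚ ω' := by
    apply LinearIndependent.of_comp W.subtype
    have : W.subtype ∘ ω' = ω := rfl
    rwa [this]
  have hcard := hind'.fintype_card_le_finrank
  rw [Fintype.card_fin] at hcard
  have hWle : finrank ℚ W ≤ 2 ^ (finrank ℚ V) := by
    have hr1 : Set.range (wedgeOf b) = ↑(Finset.image (wedgeOf b) Finset.univ) := by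
      ext z; simp
    have h2 : finrank ℚ (Submodule.span ℚ
        (↑(Finset.image (wedgeOf b) Finset.univ) : Set (ExteriorAlgebra ℚ V)))
        ≤ (Finset.image (wedgeOf b) Finset.univ).card :=
      finrank_span_finset_le_card _
    calc finrank ℚ W ≤ (Finset.image (wedgeOf b) Finset.univ).card := by
          rw [hWdef, hr1]; exact h2
      _ ≤ Finset.univ.card := Finset.card_image_le
      _ = 2 ^ (finrank ℚ V) := by
          rw [Finset.card_univ, Fintype.card_finset, Fintype.card_fin]
  omega

end Geometry


section Core

lemma finrank_V_eq (f : Module.End ℚ V) :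
    finrank ℚ (LinearMap.range f) + finrank ℚ (LinearMap.ker f) = finrank ℚ V :=
  LinearMap.finrank_range_add_finrank_ker f

/-- Core combinatorial lemma: a block product of length `(2^D+2)^c` whose total kernel has
dimension at most `c` contains a consecutive stable subproduct. -/
lemma core (c : ℕ) :
    ∀ (A : ℕ → Module.End ℚ V) (i j : ℕ),
      finrank ℚ (LinearMap.ker (ppE A i j)) ≤ c →
      i + (2 ^ finrank ℚ V + 2) ^ c ≤ j →
      ∃ p q, i ≤ p ∧ p < q ∧ q ≤ j ∧ NStab (ppE A p q) := by
  induction c with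
  | zero =>
    intro A i j hker hlen
    have hij : i < j := by
      have : (2 ^ finrank ℚ V + 2) ^ 0 = 1 := pow_zero _
      omega
    refine ⟨j - 1, j, by omega, by omega, le_rfl, ?_⟩
    apply nstab_of_ker_eq_bot
    have hsplit : ppE A i j = ppE A i (j - 1) * ppE A (j - 1) j :=
      ppE_split A (by omega) (by omega)
    have h1 : LinearMap.ker (ppE A (j - 1) j) ≤ LinearMap.ker (ppE A i j) := by
      rw [hsplit]; exact ker_le_ker_mul _ _
    have h2 : LinearMap.ker (ppE A i j) = ⊥ :=
      Submodule.finrank_eq_zero.mp (by omega)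
    exact le_bot_iff.mp (h2 ▸ h1)
  | succ c ih =>
    intro A i j hker hlen
    set D := finrank ℚ V with hD
    set T : ℕ := 2 ^ D + 2 with hT
    set L : ℕ := T ^ c with hL
    have hL1 : 1 ≤ L := Nat.one_le_pow _ _ (by positivity)
    have hTL : i + T * L ≤ j := by
      have : T ^ (c + 1) = T * L := by rw [hL, pow_succ, mul_comm]
      omega
    set y : ℕ → ℕ := fun t => i + t * L with hy
    have hymono : ∀ {s t : ℕ}, s < t → y s < y t := by
      intro s t hst
      have h1 : (s + 1) * L ≤ t * L := Nat.mul_le_mul (by omega) (le_refl L)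
      have h2 : s * L + L = (s + 1) * L := by ring
      simp only [hy]
      omega
    have hymono' : ∀ {s t : ℕ}, s ≤ t → y s ≤ y t := by
      intro s t hst
      rcases eq_or_lt_of_le hst with h | h
      · subst h; exact le_rfl
      · exact (hymono h).le
    have hyT : ∀ {t : ℕ}, t ≤ T → y t ≤ j := by
      intro t ht
      have ha : y t ≤ y T := hymono' ht
      have hb : y T = i + T * L := by simp [hy]
      omega
    have hy0 : y 0 = i := by simp [hy]
    -- nullity of any grid pair is at most c+1
    have hpair_le : ∀ s t, s < t → t ≤ T →
        finrank ℚ (LinearMap.ker (ppE A (y s) (y t))) ≤ c + 1 := by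
      intro s t hst htT
      have h1 : ppE A i j = ppE A i (y t) * ppE A (y t) j :=
        ppE_split A (by have := hymono' (Nat.zero_le t); omega) (hyT htT)
      have h2 : ppE A i (y t) = ppE A i (y s) * ppE A (y s) (y t) :=
        ppE_split A (by have := hymono' (Nat.zero_le s); omega) (hymono hst).le
      have hr1 : finrank ℚ (LinearMap.range (ppE A i j))
          ≤ finrank ℚ (LinearMap.range (ppE A i (y t))) := by
        rw [h1]; exact rk_mul_le_left _ _
      have hr2 : finrank ℚ (LinearMap.range (ppE A i (y t)))
          ≤ finrank ℚ (LinearMap.range (ppE A (y s) (y t))) := by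
        rw [h2]; exact rk_mul_le_right _ _
      have e1 := finrank_V_eq (ppE A i j)
      have e2 := finrank_V_eq (ppE A (y s) (y t))
      omega
    by_cases hre : ∃ s t, s < t ∧ t ≤ T ∧ finrank ℚ (LinearMap.ker (ppE A (y s) (y t))) ≤ c
    · obtain ⟨s, t, hst, htT, hk⟩ := hre
      have hlen' : y s + T ^ c ≤ y t := by
        have hh1 : (s + 1) * L ≤ t * L := Nat.mul_le_mul (by omega) (le_refl L)
        have hh2 : s * L + L = (s + 1) * L := by ring
        simp only [hy]
        omega
      obtain ⟨p, q, h1, h2, h3, h4⟩ := ih A (y s) (y t) hk hlen'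
      refine ⟨p, q, ?_, h2, ?_, h4⟩
      · have : i ≤ y s := by simp [hy]
        omega
      · have := hyT htT
        omega
    · push_neg at hre
      have hpair : ∀ s t, s < t → t ≤ T →
          finrank ℚ (LinearMap.ker (ppE A (y s) (y t))) = c + 1 := by
        intro s t hst htT
        have := hre s t hst htT
        have := hpair_le s t hst htT
        omega
      have hT1 : 1 ≤ T := by rw [hT]; exact le_trans one_le_two le_add_self
      have hcd : c + 1 ≤ D := by
        have h1 := hpair 0 1 (by omega) (by omega)
        have h2 := Submodule.finrank_le (LinearMap.ker (ppE A (y 0) (y 1)))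
        omega
      set r : ℕ := D - (c + 1) with hr
      -- ranks of all grid pairs equal r
      have hrank : ∀ s t, s < t → t ≤ T →
          finrank ℚ (LinearMap.range (ppE A (y s) (y t))) = r := by
        intro s t hst htT
        have e := finrank_V_eq (ppE A (y s) (y t))
        have := hpair s t hst htT
        omega
      -- kernels only depend on the right endpoint
      have hkereq : ∀ s s' t, s ≤ s' → s' < t → t ≤ T →
          LinearMap.ker (ppE A (y s') (y t)) = LinearMap.ker (ppE A (y s) (y t)) := by
        intro s s' t hss' hs't htT
        rcases eq_or_lt_of_le hss' with h | h
        · subst h; rfl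
        · apply Submodule.eq_of_le_of_finrank_eq
          · have hsplit : ppE A (y s) (y t) = ppE A (y s) (y s') * ppE A (y s') (y t) :=
              ppE_split A (hymono h).le (hymono hs't).le
            rw [hsplit]
            exact ker_le_ker_mul _ _
          · rw [hpair s' t hs't htT, hpair s t (h.trans hs't) htT]
      -- ranges only depend on the left endpoint
      have hrgeq : ∀ s t t', s < t → t ≤ t' → t' ≤ T →
          LinearMap.range (ppE A (y s) (y t')) = LinearMap.range (ppE A (y s) (y t)) := by
        intro s t t' hst htt' ht'T
        rcases eq_or_lt_of_le htt' with h | h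
        · subst h; rfl
        · apply Submodule.eq_of_le_of_finrank_eq
          · have hsplit : ppE A (y s) (y t') = ppE A (y s) (y t) * ppE A (y t) (y t') :=
              ppE_split A (hymono hst).le (hymono h).le
            rw [hsplit, Module.End.mul_eq_comp]
            exact LinearMap.range_comp_le_range _ _
          · rw [hrank s t' (hst.trans h) ht'T, hrank s t hst (by omega)]
      by_contra hno
      push_neg at hno
      -- build the families indexed by interior grid points
      set m : ℕ := 2 ^ D + 1 with hm
      have hmT : m + 1 = T := by rw [hm, hT]
      set ι : Fin m → Submodule ℚ V :=
        fun t => LinearMap.range (ppE A (y (t.val + 1)) (y T)) with hι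
      set κ : Fin m → Submodule ℚ V :=
        fun t => LinearMap.ker (ppE A (y 0) (y (t.val + 1))) with hκ
      have htlt : ∀ t : Fin m, t.val + 1 < T := fun t => by
        have := t.isLt; omega
      have hb : Nonempty (Basis (Fin (finrank ℚ V)) ℚ V) :=
        ⟨(Module.finBasis ℚ V).reindex (finCongr rfl)⟩
      obtain ⟨b⟩ := hb
      have hgeom := geom r m b ι κ
        (fun t => hrank (t.val + 1) T (htlt t) le_rfl)
        (fun t => by
          have h1 := htlt t
          have h2 := hpair 0 (t.val + 1) (by omega) (by omega)
          have h3 : κ t = LinearMap.ker (ppE A (y 0) (y (t.val + 1))) := rfl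
          rw [h3]
          omega)
        (by omega)
        (fun t => by
          -- transversality
          rw [eq_bot_iff]
          rintro x hx
          obtain ⟨hx1, hx2⟩ := Submodule.mem_inf.mp hx
          obtain ⟨z, hz⟩ := hx1
          have hz0 : ppE A (y 0) (y T) z = 0 := by
            have hsplit : ppE A (y 0) (y T) = ppE A (y 0) (y (t.val + 1)) * ppE A (y (t.val + 1)) (y T) :=
              ppE_split A (hymono' (by omega)) (hymono' (by omega))
            rw [hsplit, Module.End.mul_apply, hz]
            exact hx2
          have hzker : z ∈ LinearMap.ker (ppE A (y (t.val + 1)) (y T)) := by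
            rw [hkereq 0 (t.val + 1) T (by omega) (htlt t) le_rfl]
            exact hz0
          rw [Submodule.mem_bot, ← hz]
          exact hzker)
        (fun t t' htt' => by
          -- instability of interior pairs
          have hvv : t.val < t'.val := htt'
          have hile : i ≤ y (t.val + 1) := by
            have h := hymono' (Nat.zero_le (t.val + 1))
            rw [hy0] at h
            exact h
          have hnost := hno (y (t.val + 1)) (y (t'.val + 1))
            hile
            (hymono (by omega))
            (hyT (le_of_lt (htlt t')))
          show LinearMap.range (ppE A (y (t.val + 1)) (y T)) ⊓
              LinearMap.ker (ppE A (y 0) (y (t'.val + 1))) ≠ ⊥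
          have hkereq' : LinearMap.ker (ppE A (y (t.val + 1)) (y (t'.val + 1)))
              = LinearMap.ker (ppE A (y 0) (y (t'.val + 1))) :=
            hkereq 0 (t.val + 1) (t'.val + 1) (by omega)
              (by omega) (le_of_lt (htlt t'))
          have hrgeq' : LinearMap.range (ppE A (y (t.val + 1)) (y T))
              = LinearMap.range (ppE A (y (t.val + 1)) (y (t'.val + 1))) :=
            hrgeq (t.val + 1) (t'.val + 1) T (by omega) (le_of_lt (htlt t')) le_rfl
          rw [← hkereq', hrgeq']
          intro hbot
          exact hnost (by rw [NStab, inf_comm]; exact hbot))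
      rw [← hD] at hgeom
      omega

end Core

lemma numer (d : ℕ) : (2 ^ d + 2) ^ d ≤ 2 ^ (d * (d + 3)) := by
  rcases Nat.eq_zero_or_pos d with h | h
  · subst h; simp
  · have h1 : 2 ^ d + 2 ≤ 2 ^ (d + 1) := by
      have h2 : 2 ≤ 2 ^ d := by
        calc 2 = 2 ^ 1 := (pow_one 2).symm
          _ ≤ 2 ^ d := Nat.pow_le_pow_right (by norm_num) h
      have h3 : 2 ^ (d + 1) = 2 ^ d + 2 ^ d := by rw [pow_succ]; ring
      omega
    calc (2 ^ d + 2) ^ d ≤ (2 ^ (d + 1)) ^ d := Nat.pow_le_pow_left h1 d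
      _ = 2 ^ ((d + 1) * d) := by rw [← pow_mul]
      _ ≤ 2 ^ (d * (d + 3)) := by
          apply Nat.pow_le_pow_right (by norm_num)
          calc (d + 1) * d = d * (d + 1) := mul_comm _ _
            _ ≤ d * (d + 3) := Nat.mul_le_mul_left d (by omega)

lemma main_pos {α : Type*} (d : ℕ)
    (φ : List α → Matrix (Fin d) (Fin d) ℚ)
    (hφ_nil : φ [] = 1) (hφ_app : ∀ u v : List α, φ (u ++ v) = φ u * φ v)
    (ω : List α → ℤ)
    (hω_nil : ω [] = 0) (hω_app : ∀ u v : List α, ω (u ++ v) = ω u + ω v)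
    (hω_letter : ∀ σ : α, ω [σ] = -1 ∨ ω [σ] = 0 ∨ ω [σ] = 1)
    (w : List α) (hw : ω w = eta d) :
    ∃ x u y : List α, w = x ++ u ++ y ∧ 0 < ω u ∧ MatStable (φ u) := by
  classical
  set n := w.length with hn
  set E : ℕ := 2 ^ (d * (d + 3)) + 1 with hE
  have hfn : ω (w.take n) = (E : ℤ) := by
    rw [hn, List.take_length, hw]
    show (2 ^ (d * (d + 3)) + 1 : ℤ) = ((E : ℕ) : ℤ)
    rw [hE]
    push_cast
    ring
  have hstep : ∀ i, i < n → ω (w.take (i + 1)) ≤ ω (w.take i) + 1 := by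
    intro i hi
    have hiw : i < w.length := by omega
    have hsplit := (List.take_concat_get' w i hiw).symm
    rw [hsplit, hω_app]
    rcases hω_letter (w[i]'hiw) with h | h | h <;> omega
  have hex : ∀ k : ℕ, ∃ i : ℕ, ((min k E : ℕ) : ℤ) ≤ ω (w.take i) := by
    intro k
    refine ⟨n, ?_⟩
    rw [hfn]
    exact_mod_cast min_le_right k E
  set cp : ℕ → ℕ := fun k => Nat.find (hex k) with hcp
  have hcple : ∀ k, cp k ≤ n := by
    intro k
    apply Nat.find_le
    rw [hfn]
    exact_mod_cast min_le_right k E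
  have hcpmono : ∀ k l, k ≤ l → cp k ≤ cp l := by
    intro k l hkl
    apply Nat.find_mono
    intro i hi
    refine le_trans ?_ hi
    exact_mod_cast min_le_min hkl le_rfl
  have hfval : ∀ k, k ≤ E → ω (w.take (cp k)) = (k : ℤ) := by
    intro k hk
    have hmin : min k E = k := min_eq_left hk
    have hspec : ((min k E : ℕ) : ℤ) ≤ ω (w.take (cp k)) := Nat.find_spec (hex k)
    rw [hmin] at hspec
    rcases Nat.eq_zero_or_pos (cp k) with h0 | h0
    · rw [h0] at hspec ⊢
      rw [List.take_zero, hω_nil] at hspec ⊢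
      omega
    · have hmin1 : ¬ ((min k E : ℕ) : ℤ) ≤ ω (w.take (cp k - 1)) :=
        Nat.find_min (hex k) (by
          have hdef : cp k = Nat.find (hex k) := rfl
          omega)
      rw [hmin] at hmin1
      push_neg at hmin1
      have hstep' := hstep (cp k - 1) (by have := hcple k; omega)
      rw [show cp k - 1 + 1 = cp k from by omega] at hstep'
      omega
  have hcpstrict : ∀ k, k < E → cp k < cp (k + 1) := by
    intro k hk
    have h1 := hfval k (by omega)
    have h2 := hfval (k + 1) (by omega)
    have hle := hcpmono k (k + 1) (by omega)
    rcases eq_or_lt_of_le hle with h | h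
    · rw [← h, h1] at h2
      omega
    · exact h
  set uu : ℕ → ℕ → List α := fun a b2 => (w.take b2).drop a with huu
  have hconcat : ∀ a b2 c2, a ≤ b2 → b2 ≤ c2 → c2 ≤ n →
      uu a b2 ++ uu b2 c2 = uu a c2 := by
    intro a b2 c2 hab hbc hcn
    simp only [huu]
    have h1 : (w.take c2).take b2 = w.take b2 := by
      rw [List.take_take, min_eq_left hbc]
    have h2 : (w.take b2).length = b2 := by
      rw [List.length_take]
      exact min_eq_left (by omega)
    have hdec : w.take c2 = w.take b2 ++ (w.take c2).drop b2 := by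
      conv_lhs => rw [← List.take_append_drop b2 (w.take c2)]
      rw [h1]
    calc (w.take b2).drop a ++ (w.take c2).drop b2
        = (w.take b2).drop a ++ ((w.take c2).drop b2).drop (a - b2) := by
          rw [show a - b2 = 0 from by omega, List.drop_zero]
      _ = (w.take b2 ++ (w.take c2).drop b2).drop a := by
          rw [List.drop_append, h2]
      _ = (w.take c2).drop a := by rw [← hdec]
  have hsplittake : ∀ p q, p ≤ q → q ≤ E →
      w.take (cp q) = w.take (cp p) ++ uu (cp p) (cp q) := by
    intro p q hpq hqE
    simp only [huu]
    conv_lhs => rw [← List.take_append_drop (cp p) (w.take (cp q))]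
    rw [List.take_take, min_eq_left (hcpmono p q hpq)]
  have homega : ∀ p q, p ≤ q → q ≤ E → ω (uu (cp p) (cp q)) = (q : ℤ) - p := by
    intro p q hpq hqE
    have hsp := hsplittake p q hpq hqE
    have happ := hω_app (w.take (cp p)) (uu (cp p) (cp q))
    rw [← hsp, hfval p (le_trans hpq hqE), hfval q hqE] at happ
    omega
  set A : ℕ → Module.End ℚ (Fin d → ℚ) :=
    fun t => ((φ (uu (cp t) (cp (t + 1)))).mulVecLin) with hA
  have hppA : ∀ p q, p ≤ q → q ≤ E →
      ppE A p q = (φ (uu (cp p) (cp q))).mulVecLin := by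
    intro p q hpq hqE
    induction q, hpq using Nat.le_induction with
    | base =>
      have h0 : uu (cp p) (cp p) = [] := by
        simp only [huu]
        apply List.drop_eq_nil_of_le
        rw [List.length_take]
        exact min_le_left _ _
      rw [ppE_same, h0, hφ_nil, Matrix.mulVecLin_one]
      rfl
    | succ q hq ih =>
      have hqE' : q ≤ E := by omega
      have hcc : uu (cp p) (cp q) ++ uu (cp q) (cp (q + 1)) = uu (cp p) (cp (q + 1)) :=
        hconcat _ _ _ (hcpmono p q hq) (hcpmono q (q + 1) (by omega)) (hcple _)
      rw [ppE_succ A hq, ih hqE', ← hcc, hφ_app, Matrix.mulVecLin_mul,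
        ← Module.End.mul_eq_comp]
  have hfrk : finrank ℚ (Fin d → ℚ) = d := by
    rw [Module.finrank_fintype_fun_eq_card, Fintype.card_fin]
  have hker0 : finrank ℚ (LinearMap.ker (ppE A 0 E)) ≤ d := by
    have h1 := Submodule.finrank_le (LinearMap.ker (ppE A 0 E))
    omega
  obtain ⟨p, q, hp0, hpq, hqE, hstab⟩ := core d A 0 E hker0 (by
    rw [hfrk]
    have h1 := numer d
    omega)
  refine ⟨w.take (cp p), uu (cp p) (cp q), w.drop (cp q), ?_, ?_, ?_⟩
  · conv_lhs => rw [← List.take_append_drop (cp q) w]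
    rw [hsplittake p q hpq.le hqE]
  · have h1 := homega p q hpq.le hqE
    omega
  · rw [hppA p q hpq.le hqE] at hstab
    have hk2 := ker_sq_of_nstab hstab
    set f := (φ (uu (cp p) (cp q))).mulVecLin with hf
    have e1 := LinearMap.finrank_range_add_finrank_ker f
    have e2 := LinearMap.finrank_range_add_finrank_ker (f * f)
    have hkeq : finrank ℚ (LinearMap.ker (f * f)) = finrank ℚ (LinearMap.ker f) := by
      rw [hk2]
    have hrk : finrank ℚ (LinearMap.range (f * f)) = finrank ℚ (LinearMap.range f) := by
      omega
    change finrank ℚ (LinearMap.range (φ (uu (cp p) (cp q))).mulVecLin)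
      = finrank ℚ (LinearMap.range ((φ (uu (cp p) (cp q)) * φ (uu (cp p) (cp q)))).mulVecLin)
    rw [Matrix.mulVecLin_mul, ← Module.End.mul_eq_comp, ← hf]
    exact hrk.symm

end StableAux


/-- Let `Σ` be a finite alphabet, `φ : Σ* → M_d(ℚ)` and `ω : Σ* → ℤ` monoid morphisms
with `ω(σ) ∈ {-1,0,1}` for every letter `σ`.  For every word `w`:
(i) if `ω(w) = η(d)` then some factor `u` of `w` has `ω(u) > 0` and `φ(u)` stable;
(ii) if `ω(w) = -η(d)` then some factor `u` of `w` has `ω(u) < 0` and `φ(u)` stable. -/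
theorem stable_factor_of_large_weight {α : Type*} [Fintype α] (d : ℕ)
    (φ : List α → Matrix (Fin d) (Fin d) ℚ)
    (hφ_nil : φ [] = 1) (hφ_app : ∀ u v : List α, φ (u ++ v) = φ u * φ v)
    (ω : List α → ℤ)
    (hω_nil : ω [] = 0) (hω_app : ∀ u v : List α, ω (u ++ v) = ω u + ω v)
    (hω_letter : ∀ σ : α, ω [σ] = -1 ∨ ω [σ] = 0 ∨ ω [σ] = 1)
    (w : List α) :
    (ω w = eta d →
      ∃ x u y : List α, w = x ++ u ++ y ∧ 0 < ω u ∧ MatStable (φ u)) ∧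
    (ω w = -eta d →
      ∃ x u y : List α, w = x ++ u ++ y ∧ ω u < 0 ∧ MatStable (φ u)) := by
  constructor
  · intro hw
    exact StableAux.main_pos d φ hφ_nil hφ_app ω hω_nil hω_app hω_letter w hw
  · intro hw
    have h := StableAux.main_pos d φ hφ_nil hφ_app (fun u => -(ω u))
      (by show -(ω []) = 0; rw [hω_nil]; ring)
      (fun u v => by show -(ω (u ++ v)) = -(ω u) + -(ω v); rw [hω_app]; ring)
      (fun σ => by rcases hω_letter σ with h | h | h <;> simp [h])
      w (by show -(ω w) = eta d; rw [hw]; ring)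
    obtain ⟨x, u, y, hxy, hωu, hst⟩ := h
    exact ⟨x, u, y, hxy, by exact neg_pos.mp hωu, hst⟩
end

section
/- There exists a regular language L ⊆ Σ* such that: (1) L_C(ω) ⊆ L; and (2) every word w ∈ L \ L_C(ω) admits a factorization w = w₁ u w₂ such that φ(u) is stable, ω(u) > 0, and ω(w') ≥ 0 for every prefix w' of w₁u. -/
/-- The coverability language of `ω`: words all of whose prefixes have nonnegative
weight. -/
def coverLang {α : Type*} (ω : List α → ℤ) : Set (List α) :=
  {w | ∀ u : List α, u <+: w → 0 ≤ ω u}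

/-!
The language is `L_C(ω) ∪ {w | w has a prefix in L_C(ω) of weight ≥ N}`; it is regular because
the weight only has to be tracked while it lies in `[0, N)`.

A word of `L \ L_C(ω)` has a coverable prefix `p` with `ω p ≥ N`. Its prefixes of weights
`0, …, N` cut it into factors, every factor between two cuts has positive weight, and `X i j`
denotes the image under `φ` of the factor between cuts `i` and `j`. Repeatedly splitting into `m`
blocks and passing to a block of larger rank yields `m + 1` cuts between which all `X s t` have
the same rank `r`. Then `X s t` has the column space of `X s (s+1)` and the row space of
`X (t-1) t`, spanned by the columns of some `P s` and the rows of some `Q t`, both of size `r`,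
so `X s t` is stable iff `det (Q t * P s) ≠ 0`, and `det (Q t * P t) ≠ 0` at the inner cuts. If no
`X s t` were stable, the multilinear forms `Q ↦ det (Q * P t)` would be triangular against
evaluation at the `Q t`, hence independent in a space of dimension `d ^ r`; this bounds `m`.
-/

open Matrix Module

namespace Matrix

variable {K : Type*} [Field K] {l m n o ι κ : Type*}

theorem exists_eq_mul_of_rank_eq [Fintype n] {A : Matrix m n K} {r : ℕ} (h : A.rank = r) :
    ∃ (P : Matrix m (Fin r) K) (B : Matrix (Fin r) n K), A = P * B := by
  classical
  let b := finBasisOfFinrankEq K (LinearMap.range A.mulVecLin) h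
  have hcol (k : n) : A.col k ∈ LinearMap.range A.mulVecLin := ⟨Pi.single k 1, by ext; simp⟩
  refine ⟨of fun i j => (b j : m → K) i, of fun j k => b.repr ⟨A.col k, hcol k⟩ j, ?_⟩
  ext i k
  have := congrArg (fun v : LinearMap.range A.mulVecLin => (v : m → K) i)
    (b.sum_repr ⟨A.col k, hcol k⟩)
  simp only [Submodule.coe_sum, Submodule.coe_smul, Finset.sum_apply, Pi.smul_apply,
    smul_eq_mul] at this
  simpa [mul_apply, mul_comm] using this.symm

theorem range_mulVecLin_eq_top_of_rank_eq_card [Fintype m] [Fintype n] {A : Matrix m n K}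
    (h : A.rank = Fintype.card m) : LinearMap.range A.mulVecLin = ⊤ :=
  Submodule.eq_top_of_finrank_eq (by rw [← rank, h, finrank_fintype_fun_eq_card])

theorem rank_mul_eq_left_of_rank_eq_card [Fintype m] [Fintype n] (A : Matrix l m K)
    {B : Matrix m n K} (hB : B.rank = Fintype.card m) : (A * B).rank = A.rank := by
  rw [rank, rank, mulVecLin_mul, LinearMap.range_comp, range_mulVecLin_eq_top_of_rank_eq_card hB,
    Submodule.map_top]

theorem rank_mul_eq_right_of_rank_eq_card [Fintype l] [Fintype m] [Fintype n]
    {A : Matrix l m K} (B : Matrix m n K) (hA : A.rank = Fintype.card m) :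
    (A * B).rank = B.rank := by
  rw [← rank_transpose, transpose_mul,
    rank_mul_eq_left_of_rank_eq_card _ (by rwa [rank_transpose]), rank_transpose]

theorem rank_mul_mul_mul_eq_of_rank_eq_card [Fintype l] [Fintype ι] [Fintype m] [Fintype κ]
    [Fintype o] {A : Matrix l ι K} {B : Matrix ι m K} {C : Matrix m κ K} {D : Matrix κ o K}
    (hAB : (A * B).rank = Fintype.card ι) (hCD : (C * D).rank = Fintype.card κ) :
    (A * B * (C * D)).rank = (B * C).rank := by
  have hA : A.rank = Fintype.card ι :=
    le_antisymm (rank_le_card_width A) (hAB ▸ rank_mul_le_left A B)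
  have hD : D.rank = Fintype.card κ :=
    le_antisymm (rank_le_card_height D) (hCD ▸ rank_mul_le_right C D)
  rw [show A * B * (C * D) = A * (B * C) * D by simp only [Matrix.mul_assoc],
    rank_mul_eq_left_of_rank_eq_card _ hD, rank_mul_eq_right_of_rank_eq_card _ hA]

theorem det_ne_zero_of_rank_eq_card [Fintype m] [DecidableEq m] {A : Matrix m m K}
    (h : A.rank = Fintype.card m) : A.det ≠ 0 :=
  ((isUnit_iff_isUnit_det A).mp (mulVec_surjective_iff_isUnit.mp
    (LinearMap.range_eq_top.mp (range_mulVecLin_eq_top_of_rank_eq_card h)))).ne_zero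

noncomputable def detMulForm [Fintype n] [Fintype ι] [DecidableEq ι] (P : Matrix n ι K) :
    MultilinearMap K (fun _ : ι => n → K) K :=
  (detRowAlternating : (ι → K) [⋀^ι]→ₗ[K] K).toMultilinearMap.compLinearMap
    fun _ => P.vecMulLinear

theorem detMulForm_apply [Fintype n] [Fintype ι] [DecidableEq ι] (P : Matrix n ι K)
    (Q : Matrix ι n K) : detMulForm P Q = (Q * P).det :=
  rfl

end Matrix

theorem finrank_multilinearMap_fun {K n ι : Type*} [Field K] [Fintype n] [DecidableEq n]
    [Fintype ι] [DecidableEq ι] : finrank K (MultilinearMap K (fun _ : ι => n → K) K) =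
      Fintype.card n ^ Fintype.card ι := by
  rw [finrank_eq_card_basis
    (Basis.multilinearMap (fun _ => Pi.basisFun K n) (Basis.singleton Unit K))]
  simp

theorem linearIndependent_of_triangular {K ι V : Type*} [Field K] [Fintype ι] [LinearOrder ι]
    [AddCommGroup V] [Module K V] (z : ι → V) (f : ι → Dual K V)
    (hdiag : ∀ i, f i (z i) ≠ 0) (htri : ∀ i j, j < i → f i (z j) = 0) :
    LinearIndependent K z := by
  classical
  rw [Fintype.linearIndependent_iff]
  intro c hc
  let E : Matrix ι ι K := of fun i j => f i (z j)
  have hE : E.det ≠ 0 := by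
    rw [det_of_isUpperTriangular (M := E) fun i j hji => htri i j hji]
    exact Finset.prod_ne_zero_iff.mpr fun i _ => hdiag i
  have hEc : E *ᵥ c = 0 := by
    ext i
    simpa [E, mulVec, dotProduct, mul_comm] using congrArg (f i) hc
  exact congrFun (eq_zero_of_mulVec_eq_zero hE hEc)

def IsIntervalProduct {M : Type*} [Mul M] (X : ℕ → ℕ → M) : Prop :=
  ∀ i j k, i ≤ j → j ≤ k → X i j * X j k = X i k

namespace IsIntervalProduct

theorem comp_monotone {M : Type*} [Mul M] {X : ℕ → ℕ → M} (hX : IsIntervalProduct X)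
    {q : ℕ → ℕ} (hq : Monotone q) : IsIntervalProduct fun s t => X (q s) (q t) :=
  fun _ _ _ hij hjk => hX _ _ _ (hq hij) (hq hjk)

variable {K : Type*} [Field K] {n : Type*} [Fintype n] {X : ℕ → ℕ → Matrix n n K}

theorem rank_le_of_subinterval (hX : IsIntervalProduct X) {a i j b : ℕ} (hai : a ≤ i)
    (hij : i ≤ j) (hjb : j ≤ b) : (X a b).rank ≤ (X i j).rank :=
  calc (X a b).rank = (X a i * (X i j * X j b)).rank := by
          rw [hX i j b hij hjb, hX a i b hai (hij.trans hjb)]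
    _ ≤ (X i j * X j b).rank := rank_mul_le_right _ _
    _ ≤ (X i j).rank := rank_mul_le_left _ _

theorem exists_strictMono_or_rank_lt (hX : IsIntervalProduct X) (a l m : ℕ) (hl : 0 < l) :
    (∃ q : ℕ → ℕ, StrictMono q ∧ q m ≤ a + m * l ∧
      ∃ r, ∀ s t, s < t → t ≤ m → (X (q s) (q t)).rank = r) ∨
    ∃ s < m, (X a (a + m * l)).rank < (X (a + s * l) (a + s * l + l)).rank := by
  by_cases hblocks : ∀ s < m, (X (a + s * l) (a + s * l + l)).rank = (X a (a + m * l)).rank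
  · refine Or.inl ⟨fun s => a + s * l, fun s t hst => by dsimp only; nlinarith, le_rfl,
      (X a (a + m * l)).rank, fun s t hst htm => ?_⟩
    have hst' : s * l + l ≤ t * l := by nlinarith
    have htm' : t * l ≤ m * l := Nat.mul_le_mul_right l htm
    dsimp only
    refine le_antisymm ?_ (hX.rank_le_of_subinterval (by omega) (by omega) (by omega))
    calc (X (a + s * l) (a + t * l)).rank ≤ (X (a + s * l) (a + s * l + l)).rank :=
          hX.rank_le_of_subinterval le_rfl (by omega) (by omega)
      _ = _ := hblocks s (by omega)
  · push Not at hblocks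
    obtain ⟨s, hs, hne⟩ := hblocks
    have hsl : s * l + l ≤ m * l := by nlinarith
    exact Or.inr ⟨s, hs,
      lt_of_le_of_ne (hX.rank_le_of_subinterval (by omega) (by omega) (by omega)) hne.symm⟩

theorem exists_strictMono_rank_eq (hX : IsIntervalProduct X) {m : ℕ} (hm : 0 < m) (k : ℕ) :
    ∀ a, Fintype.card n ≤ (X a (a + m ^ (k + 1))).rank + k →
      ∃ q : ℕ → ℕ, StrictMono q ∧ q m ≤ a + m ^ (k + 1) ∧
        ∃ r, ∀ s t, s < t → t ≤ m → (X (q s) (q t)).rank = r := by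
  induction k with
  | zero =>
    intro a ha
    obtain h | ⟨s, -, hlt⟩ := hX.exists_strictMono_or_rank_lt a 1 m one_pos
    · simpa only [zero_add, pow_one, mul_one] using h
    · rw [zero_add, pow_one] at ha
      rw [mul_one] at hlt
      have := rank_le_card_height (X (a + s * 1) (a + s * 1 + 1))
      omega
  | succ k ih =>
    intro a ha
    obtain h | ⟨s, hs, hlt⟩ :=
      hX.exists_strictMono_or_rank_lt a (m ^ (k + 1)) m (by positivity)
    · rwa [← pow_succ'] at h
    rw [← pow_succ'] at hlt
    obtain ⟨q, hq, hqm, hr⟩ := ih (a + s * m ^ (k + 1)) (by omega)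
    have : s * m ^ (k + 1) + m ^ (k + 1) ≤ m ^ (k + 1 + 1) := by
      rw [pow_succ' m (k + 1)]
      nlinarith [Nat.mul_le_mul_right (m ^ (k + 1)) hs]
    exact ⟨q, hq, by omega, hr⟩

theorem exists_rank_mul_eq_rank_mul_of_rank_eq (hX : IsIntervalProduct X) {r L : ℕ}
    (hrank : ∀ s t, s < t → t ≤ L → (X s t).rank = r) :
    ∃ (P : ℕ → Matrix n (Fin r) K) (Q : ℕ → Matrix (Fin r) n K),
      ∀ s t u v, s < t → t ≤ L → u < v → v ≤ L → (X s t * X u v).rank = (Q t * P u).rank := by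
  have hPB (s : ℕ) : ∃ (P : Matrix n (Fin r) K) (B : Matrix (Fin r) n K),
      s < L → X s (s + 1) = P * B := by
    by_cases hs : s < L
    · obtain ⟨P, B, h⟩ := exists_eq_mul_of_rank_eq (hrank s (s + 1) (by omega) hs)
      exact ⟨P, B, fun _ => h⟩
    · exact ⟨0, 0, fun h => absurd h hs⟩
  have hCQ (t : ℕ) : ∃ (C : Matrix n (Fin r) K) (Q : Matrix (Fin r) n K),
      0 < t → t ≤ L → X (t - 1) t = C * Q := by
    by_cases ht : 0 < t ∧ t ≤ L
    · obtain ⟨C, Q, h⟩ := exists_eq_mul_of_rank_eq (hrank (t - 1) t (by omega) ht.2)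
      exact ⟨C, Q, fun _ _ => h⟩
    · exact ⟨0, 0, fun h h' => absurd ⟨h, h'⟩ ht⟩
  choose P B hPB using hPB
  choose C Q hCQ using hCQ
  refine ⟨P, Q, fun s t u v hst htL huv hvL => ?_⟩
  have hleft : X s (t - 1) * C t * Q t = X s t := by
    rw [Matrix.mul_assoc, ← hCQ t (by omega) htL, hX s (t - 1) t (by omega) (by omega)]
  have hright : P u * (B u * X (u + 1) v) = X u v := by
    rw [← Matrix.mul_assoc, ← hPB u (by omega), hX u (u + 1) v (by omega) (by omega)]
  have := rank_mul_mul_mul_eq_of_rank_eq_card (B := Q t) (C := P u)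
    (by rw [hleft, hrank s t hst htL, Fintype.card_fin])
    (by rw [hright, hrank u v huv hvL, Fintype.card_fin])
  rwa [hleft, hright] at this

theorem exists_rank_eq_rank_mul_self_of_rank_eq [DecidableEq n] (hX : IsIntervalProduct X)
    {r L : ℕ} (hrank : ∀ s t, s < t → t ≤ L → (X s t).rank = r)
    (hL : Fintype.card n ^ r + 2 ≤ L) :
    ∃ s t, s < t ∧ t ≤ L ∧ (X s t).rank = (X s t * X s t).rank := by
  by_contra! hunstable
  obtain ⟨P, Q, hrank_mul⟩ := hX.exists_rank_mul_eq_rank_mul_of_rank_eq hrank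
  have hdet_eq_zero (s t : ℕ) (hst : s < t) (htL : t ≤ L) : (Q t * P s).det = 0 := by
    by_contra hdet
    apply hunstable s t hst htL
    rw [hrank_mul s t s t hst htL hst htL, rank_of_det_ne_zero hdet, Fintype.card_fin,
      hrank s t hst htL]
  have hdet_ne_zero (t : ℕ) (ht0 : 0 < t) (htL : t < L) : (Q t * P t).det ≠ 0 := by
    apply det_ne_zero_of_rank_eq_card
    rw [← hrank_mul 0 t t L ht0 htL.le htL le_rfl, hX 0 t L ht0.le htL.le,
      hrank 0 L (by omega) le_rfl, Fintype.card_fin]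
  let ev (Q : Matrix (Fin r) n K) : Dual K (MultilinearMap K (fun _ : Fin r => n → K) K) :=
    { toFun := fun F => F Q, map_add' := fun _ _ => rfl, map_smul' := fun _ _ => rfl }
  have hli : LinearIndependent K fun i : Fin (L - 1) => detMulForm (P (i + 1)) :=
    linearIndependent_of_triangular _ (fun i => ev (Q (i + 1)))
      (fun i => by
        simpa [ev, detMulForm_apply] using hdet_ne_zero (i + 1) (by omega) (by omega))
      (fun i j hji => by
        simpa [ev, detMulForm_apply] using
          hdet_eq_zero (j + 1) (i + 1) (by simpa using hji) (by omega))
  have := hli.fintype_card_le_finrank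
  rw [finrank_multilinearMap_fun, Fintype.card_fin, Fintype.card_fin] at this
  omega

end IsIntervalProduct

/-- `d ^ d + 2` consecutive intervals of constant rank contain a stable product, and reaching
constant rank costs a factor `d ^ d + 2` in length for each of the `d + 1` possible ranks. -/
def stableBound (d : ℕ) : ℕ := (d ^ d + 2) ^ (d + 1)

theorem IsIntervalProduct.exists_rank_eq_rank_mul_self {K n : Type*} [Field K] [Fintype n]
    [DecidableEq n] {X : ℕ → ℕ → Matrix n n K} (hX : IsIntervalProduct X) :
    ∃ i j, i < j ∧ j ≤ stableBound (Fintype.card n) ∧ (X i j).rank = (X i j * X i j).rank := by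
  set d := Fintype.card n
  obtain ⟨q, hq, hqm, r, hr⟩ :=
    hX.exists_strictMono_rank_eq (m := d ^ d + 2) (by positivity) d 0 (Nat.le_add_left _ _)
  have hrd : r ≤ d := hr 0 1 one_pos (by omega) ▸ rank_le_card_height _
  have hpow : d ^ r ≤ d ^ d := by
    rcases Nat.eq_zero_or_pos d with hd | hd
    · simp [hd, Nat.le_zero.mp (hd ▸ hrd)]
    · exact Nat.pow_le_pow_right hd hrd
  obtain ⟨s, t, hst, htm, hstable⟩ :=
    (hX.comp_monotone hq.monotone).exists_rank_eq_rank_mul_self_of_rank_eq hr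
      (by change d ^ r + 2 ≤ d ^ d + 2; omega)
  exact ⟨q s, q t, hq hst, (hq.monotone htm).trans (by simpa [stableBound] using hqm), hstable⟩

theorem List.take_eq_take_append_drop_take {α : Type*} {l : List α} {i j : ℕ} (hij : i ≤ j) :
    l.take j = l.take i ++ (l.take j).drop i := by
  conv_lhs => rw [← List.take_append_drop i (l.take j)]
  rw [List.take_take, min_eq_left hij]

theorem List.drop_take_append_drop_take {α : Type*} {l : List α} {i j k : ℕ} (hij : i ≤ j)
    (hjk : j ≤ k) : (l.take j).drop i ++ (l.take k).drop j = (l.take k).drop i := by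
  apply List.append_cancel_left (as := l.take i)
  rw [← List.append_assoc, ← take_eq_take_append_drop_take hij,
    ← take_eq_take_append_drop_take hjk, ← take_eq_take_append_drop_take (hij.trans hjk)]

section Weight

variable {α : Type*} {ω : List α → ℤ}

theorem weight_nil_of_append (hω : ∀ u v, ω (u ++ v) = ω u + ω v) : ω [] = 0 := by
  simpa using hω [] []

theorem weight_take_add_one_le (hω : ∀ u v, ω (u ++ v) = ω u + ω v) (hω₁ : ∀ a, ω [a] ≤ 1)
    (p : List α) (n : ℕ) : ω (p.take (n + 1)) ≤ ω (p.take n) + 1 := by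
  rw [List.take_add_one, hω]
  cases p[n]? with
  | none => simp [weight_nil_of_append hω]
  | some a => simpa using hω₁ a

theorem exists_take_weight_eq (hω : ∀ u v, ω (u ++ v) = ω u + ω v) (hω₁ : ∀ a, ω [a] ≤ 1)
    (p : List α) (n : ℕ) {k : ℤ} (hk0 : 0 ≤ k) (hk : k ≤ ω (p.take n)) :
    ∃ m ≤ n, ω (p.take m) = k := by
  induction n with
  | zero =>
    rw [List.take_zero, weight_nil_of_append hω] at hk
    exact ⟨0, le_rfl, by rw [List.take_zero, weight_nil_of_append hω]; omega⟩
  | succ n ih =>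
    by_cases hkn : k ≤ ω (p.take n)
    · obtain ⟨m, hm, h⟩ := ih hkn
      exact ⟨m, by omega, h⟩
    · exact ⟨n + 1, le_rfl, by have := weight_take_add_one_le hω hω₁ p n; omega⟩

theorem exists_monotone_take_weight_eq (hω : ∀ u v, ω (u ++ v) = ω u + ω v)
    (hω₁ : ∀ a, ω [a] ≤ 1) {p : List α} {K : ℕ} (hK : (K : ℤ) ≤ ω p) :
    ∃ t : ℕ → ℕ, Monotone t ∧ ∀ k ≤ K, ω (p.take (t k)) = k := by
  classical
  have hex (k : ℕ) : ∃ m, ω (p.take m) = (min k K : ℕ) := by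
    obtain ⟨m, -, hm⟩ := exists_take_weight_eq hω hω₁ p p.length (k := (min k K : ℕ))
      (by positivity) (by rw [List.take_length]; omega)
    exact ⟨m, hm⟩
  refine ⟨fun k => Nat.find (hex k), fun i j hij => ?_, fun k hk => ?_⟩
  · obtain ⟨m, hm, hwm⟩ := exists_take_weight_eq hω hω₁ p (Nat.find (hex j))
      (k := (min i K : ℕ)) (by positivity) (by rw [Nat.find_spec (hex j)]; omega)
    exact (Nat.find_min' (hex i) hwm).trans hm
  · simpa [hk] using Nat.find_spec (hex k)

theorem exists_infix_matStable {d : ℕ} {φ : List α → Matrix (Fin d) (Fin d) ℚ}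
    (hφ : ∀ u v, φ (u ++ v) = φ u * φ v) (hω : ∀ u v, ω (u ++ v) = ω u + ω v)
    (hω₁ : ∀ a, ω [a] ≤ 1) {p : List α} (hp : (stableBound d : ℤ) ≤ ω p) :
    ∃ w₁ u w₂, p = w₁ ++ u ++ w₂ ∧ MatStable (φ u) ∧ 0 < ω u := by
  obtain ⟨t, ht, hωt⟩ := exists_monotone_take_weight_eq hω hω₁ hp
  have hX : IsIntervalProduct fun i j => φ ((p.take (t j)).drop (t i)) :=
    fun i j k hij hjk => by rw [← hφ, List.drop_take_append_drop_take (ht hij) (ht hjk)]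
  obtain ⟨i, j, hij, hj, hstable⟩ := hX.exists_rank_eq_rank_mul_self
  rw [Fintype.card_fin] at hj
  have hsplit := List.take_eq_take_append_drop_take (l := p) (ht hij.le)
  refine ⟨p.take (t i), (p.take (t j)).drop (t i), p.drop (t j), ?_, hstable, ?_⟩
  · rw [← hsplit, List.take_append_drop]
  · have := congrArg ω hsplit
    rw [hω, hωt i (by omega), hωt j hj] at this
    omega

end Weight

section CoverLang

variable {α : Type*} {ω : List α → ℤ}

def coverLangAbove (ω : List α → ℤ) (K : ℕ) : Set (List α) :=
  {w | ∃ v, v <+: w ∧ v ∈ coverLang ω ∧ (K : ℤ) ≤ ω v}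

open scoped Classical in
/-- The state of the automaton for `coverLang ω ∪ coverLangAbove ω K` after reading `w`:
`none` is the rejecting sink and `some K` the accepting one. -/
noncomputable def coverState (ω : List α → ℤ) (K : ℕ) (w : List α) : Option ℤ :=
  if w ∈ coverLangAbove ω K then some K else if w ∈ coverLang ω then some (ω w) else none

def coverStep (ω : List α → ℤ) (K : ℕ) : Option ℤ → α → Option ℤ
  | none, _ => none
  | some k, a => if (K : ℤ) ≤ k then some k else if k + ω [a] < 0 then none else some (k + ω [a])

theorem mem_coverLang_append_singleton {w : List α} {a : α} :
    w ++ [a] ∈ coverLang ω ↔ w ∈ coverLang ω ∧ 0 ≤ ω (w ++ [a]) := by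
  simp only [coverLang, Set.mem_ofPred_eq, List.prefix_concat_iff, or_imp, forall_and,
    forall_eq]
  tauto

theorem mem_coverLangAbove_append_singleton {K : ℕ} {w : List α} {a : α} :
    w ++ [a] ∈ coverLangAbove ω K ↔
      w ∈ coverLangAbove ω K ∨ (w ++ [a] ∈ coverLang ω ∧ (K : ℤ) ≤ ω (w ++ [a])) := by
  simp only [coverLangAbove, Set.mem_ofPred_eq, List.prefix_concat_iff, or_and_right, exists_or,
    exists_eq_left]
  exact or_comm

theorem coverState_append_singleton (hω : ∀ u v, ω (u ++ v) = ω u + ω v)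
    (hω₁ : ∀ a, ω [a] ≤ 1) (K : ℕ) (w : List α) (a : α) :
    coverState ω K (w ++ [a]) = coverStep ω K (coverState ω K w) a := by
  have ha := hω₁ a
  unfold coverState
  rw [mem_coverLangAbove_append_singleton, mem_coverLang_append_singleton, hω]
  by_cases hA : w ∈ coverLangAbove ω K
  · simp [hA, coverStep]
  by_cases hC : w ∈ coverLang ω
  · have hlt : ω w < K := by
      by_contra h
      exact hA ⟨w, List.prefix_rfl, hC, by omega⟩
    simp only [hA, hC, coverStep, if_false, if_true, if_neg (not_le.mpr hlt), true_and,
      false_or]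
    split_ifs <;> first | rfl | (exfalso; omega) | (congr 1; omega)
  · simp [hA, hC, coverStep]

theorem finite_range_coverState (K : ℕ) : (Set.range (coverState ω K)).Finite := by
  refine (((Set.finite_Icc (0 : ℤ) K).image some).insert none).subset ?_
  rintro _ ⟨w, rfl⟩
  unfold coverState
  split_ifs with hA hC
  · exact Or.inr ⟨K, ⟨by positivity, le_rfl⟩, rfl⟩
  · exact Or.inr ⟨ω w, ⟨hC w List.prefix_rfl,
      (not_le.mp fun h => hA ⟨w, List.prefix_rfl, hC, h⟩).le⟩, rfl⟩
  · exact Or.inl rfl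

end CoverLang

theorem Language.isRegular_preimage_of_append_singleton {α σ : Type*} (f : List α → σ)
    (step : σ → α → σ) (hf : ∀ w a, f (w ++ [a]) = step (f w) a) (hfin : (Set.range f).Finite)
    (A : Set σ) : Language.IsRegular (f ⁻¹' A : Language α) := by
  let M : DFA α σ := ⟨step, f [], A⟩
  have heval : M.eval = f := funext fun w => by
    induction w using List.reverseRecOn with
    | nil => rfl
    | append_singleton w a ih => rw [DFA.eval_append_singleton, ih, hf]
  have hacc : M.accepts = f ⁻¹' A := by
    ext w
    rw [DFA.mem_accepts, heval]
    rfl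
  rw [← hacc]
  refine Language.IsRegular.of_finite_range_leftQuotient ?_
  rw [Language.leftQuotient_accepts, heval, Set.range_comp]
  exact hfin.image _

theorem isRegular_coverLang_union_coverLangAbove {α : Type*} {ω : List α → ℤ}
    (hω : ∀ u v, ω (u ++ v) = ω u + ω v) (hω₁ : ∀ a, ω [a] ≤ 1) (K : ℕ) :
    Language.IsRegular ((coverLang ω ∪ coverLangAbove ω K : Set (List α)) : Language α) := by
  have : coverLang ω ∪ coverLangAbove ω K = coverState ω K ⁻¹' {none}ᶜ := by
    ext w
    simp only [Set.mem_union, Set.mem_preimage, Set.mem_compl_singleton_iff, coverState]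
    split_ifs <;> simp_all
  rw [this]
  exact Language.isRegular_preimage_of_append_singleton _ _ (coverState_append_singleton hω hω₁ K)
    (finite_range_coverState K) _

theorem cover_regular_approximation_general {α : Type*} (d : ℕ)
    (φ : List α → Matrix (Fin d) (Fin d) ℚ)
    (hφ_app : ∀ u v : List α, φ (u ++ v) = φ u * φ v)
    (ω : List α → ℤ)
    (hω_app : ∀ u v : List α, ω (u ++ v) = ω u + ω v)
    (hω_letter : ∀ σ : α, ω [σ] = -1 ∨ ω [σ] = 0 ∨ ω [σ] = 1) :
    ∃ L : Set (List α), Language.IsRegular (L : Language α) ∧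
      coverLang ω ⊆ L ∧
      ∀ w ∈ L \ coverLang ω,
        ∃ w₁ u w₂ : List α, w = w₁ ++ u ++ w₂ ∧ MatStable (φ u) ∧ 0 < ω u ∧
          ∀ w' : List α, w' <+: (w₁ ++ u) → 0 ≤ ω w' := by
  have hω₁ (σ : α) : ω [σ] ≤ 1 := by rcases hω_letter σ with h | h | h <;> omega
  refine ⟨coverLang ω ∪ coverLangAbove ω (stableBound d),
    isRegular_coverLang_union_coverLangAbove hω_app hω₁ _, Set.subset_union_left, ?_⟩
  rintro w ⟨hw | ⟨p, ⟨s, rfl⟩, hp, hpK⟩, hw'⟩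
  · exact absurd hw hw'
  obtain ⟨w₁, u, w₂, rfl, hu, hωu⟩ := exists_infix_matStable hφ_app hω_app hω₁ hpK
  exact ⟨w₁, u, w₂ ++ s, by simp, hu, hωu,
    fun w' hw' => hp w' (hw'.trans (List.prefix_append _ _))⟩

/-- For monoid morphisms `φ : Σ* → M_d(ℚ)` and `ω : Σ* → ℤ` (with letter weights in
`{-1,0,1}`), there is a regular language `L` containing the coverability language
`L_C(ω)` such that every word `w ∈ L \ L_C(ω)` factors as `w = w₁ u w₂` with `φ(u)`
stable, `ω(u) > 0`, and every prefix of `w₁u` of nonnegative weight. -/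
theorem cover_regular_approximation {α : Type*} [Fintype α] (d : ℕ)
    (φ : List α → Matrix (Fin d) (Fin d) ℚ)
    (hφ_nil : φ [] = 1) (hφ_app : ∀ u v : List α, φ (u ++ v) = φ u * φ v)
    (ω : List α → ℤ)
    (hω_nil : ω [] = 0) (hω_app : ∀ u v : List α, ω (u ++ v) = ω u + ω v)
    (hω_letter : ∀ σ : α, ω [σ] = -1 ∨ ω [σ] = 0 ∨ ω [σ] = 1) :
    ∃ L : Set (List α), Language.IsRegular (L : Language α) ∧
      coverLang ω ⊆ L ∧
      ∀ w ∈ L \ coverLang ω,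
        ∃ w₁ u w₂ : List α, w = w₁ ++ u ++ w₂ ∧ MatStable (φ u) ∧ 0 < ω u ∧
          ∀ w' : List α, w' <+: (w₁ ++ u) → 0 ≤ ω w' :=
  cover_regular_approximation_general d φ hφ_app ω hω_app hω_letter
end

section
/- Let L ⊆ Σ* be any language such that: (1) L_C(ω) ⊆ L; and (2) every word w ∈ L \ L_C(ω) admits a factorization w = w₁ u w₂ such that φ(u) is stable, ω(u) > 0, and ω(w') ≥ 0 for every prefix w' of w₁u. Then the Zariski closure of φ(L_C(ω)) in M_d(ℚ̄) equals the Zariski closure of φ(L). -/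
noncomputable section

/-- The algebraic closure of `ℚ`. -/
abbrev Qbar : Type := AlgebraicClosure ℚ

/-- View a rational matrix inside `M_d(ℚ̄)`. -/
def liftMat {d : ℕ} (M : Matrix (Fin d) (Fin d) ℚ) : Matrix (Fin d) (Fin d) Qbar :=
  M.map (algebraMap ℚ Qbar)

/-- The Zariski closure of a set of `d × d` matrices over `ℚ̄`, identified with affine
space `ℚ̄^(d²)`: the common zero set of all polynomials vanishing on the set. -/
def matZClosure (d : ℕ) (S : Set (Matrix (Fin d) (Fin d) Qbar)) :
    Set (Matrix (Fin d) (Fin d) Qbar) :=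
  {A | ∀ p : MvPolynomial (Fin d × Fin d) Qbar,
      (∀ B ∈ S, MvPolynomial.eval (fun ij => B ij.1 ij.2) p = 0) →
      MvPolynomial.eval (fun ij => A ij.1 ij.2) p = 0}

/-!
A word of `L \ L_C(ω)` factors as `w₁ u w₂` with `ω(u) > 0`, so the pumped words `w₁ uⁿ w₂` lie in
`L_C(ω)` once `n ≥ |w₂|`. Hence a polynomial `p` vanishing on `φ(L_C(ω))` gives `q = p(A · B)`,
with `A = φ(w₁)`, `B = φ(w₂)`, vanishing at `Mⁿ` for all large `n`, where `M = φ(u)`. Stability of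
`M` yields `Z` with `M² Z = M`, so `Mⁿ⁺ʲ Zʲ = Mⁿ` for `n ≥ 1`. The ideals `I_k` of polynomials
vanishing on `{Mⁿ : n ≥ k}` increase with `k`, so by Noetherianity `I_t = I_s` for `t ≥ s`; then
`q ∈ I_s` forces `q(· Zˢ) ∈ I_{2s+1} = I_s`, and evaluating at `Mˢ⁺¹` gives `q(M) = 0`.
-/

theorem List.prefix_append_iff {α : Type*} {l l₁ l₂ : List α} :
    l <+: l₁ ++ l₂ ↔ l <+: l₁ ∨ ∃ t, t <+: l₂ ∧ l = l₁ ++ t := by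
  refine ⟨fun h => ?_, ?_⟩
  · rcases le_total l.length l₁.length with hl | hl
    · exact .inl (List.prefix_of_prefix_length_le h (l₁.prefix_append l₂) hl)
    · obtain ⟨t, rfl⟩ := List.prefix_of_prefix_length_le (l₁.prefix_append l₂) h hl
      exact .inr ⟨t, (List.prefix_append_right_inj l₁).1 h, rfl⟩
  · rintro (h | ⟨t, ht, rfl⟩)
    · exact h.trans (l₁.prefix_append l₂)
    · exact (List.prefix_append_right_inj l₁).2 ht

section Words
variable {α : Type*}

@[to_additive]
theorem map_flatten_replicate_eq_pow {M : Type*} [Monoid M] {f : List α → M} (h_nil : f [] = 1)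
    (h_app : ∀ u v, f (u ++ v) = f u * f v) (u : List α) (n : ℕ) :
    f (List.replicate n u).flatten = f u ^ n := by
  induction n with
  | zero => simpa using h_nil
  | succ n ih =>
    rw [List.replicate_succ', List.flatten_append, List.flatten_singleton, h_app, ih, pow_succ]

theorem neg_length_le {ω : List α → ℤ} (hω_nil : ω [] = 0)
    (hω_app : ∀ u v, ω (u ++ v) = ω u + ω v) (hω_ge : ∀ σ, -1 ≤ ω [σ]) (v : List α) :
    -(v.length : ℤ) ≤ ω v := by
  induction v with
  | nil => simp [hω_nil]
  | cons σ v ih =>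
    have hσ := hω_ge σ
    rw [← List.singleton_append, hω_app, List.length_append, List.length_singleton]
    push_cast
    omega

theorem append_mem_coverLang_iff {ω : List α → ℤ} {w v : List α} :
    w ++ v ∈ coverLang ω ↔ w ∈ coverLang ω ∧ ∀ v', v' <+: v → 0 ≤ ω (w ++ v') := by
  simp only [coverLang, Set.mem_ofPred_eq, List.prefix_append_iff]
  grind

theorem append_flatten_replicate_mem_coverLang {ω : List α → ℤ} (hω_nil : ω [] = 0)
    (hω_app : ∀ u v, ω (u ++ v) = ω u + ω v) {w u : List α} (h : w ++ u ∈ coverLang ω)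
    (hu : 0 ≤ ω u) (n : ℕ) : w ++ (List.replicate n u).flatten ∈ coverLang ω := by
  have ⟨hw, hwu⟩ := append_mem_coverLang_iff.1 h
  induction n with
  | zero => simpa using hw
  | succ n ih =>
    rw [List.replicate_succ', List.flatten_append, List.flatten_singleton, ← List.append_assoc,
      append_mem_coverLang_iff]
    refine ⟨ih, fun v hv => ?_⟩
    have hwv := hwu v hv
    rw [hω_app] at hwv
    rw [hω_app, hω_app, map_flatten_replicate_eq_nsmul hω_nil hω_app]
    linarith [nsmul_nonneg hu n]

theorem append_flatten_replicate_append_mem_coverLang {ω : List α → ℤ} (hω_nil : ω [] = 0)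
    (hω_app : ∀ u v, ω (u ++ v) = ω u + ω v) (hω_ge : ∀ σ, -1 ≤ ω [σ]) {w₁ u w₂ : List α}
    (h : w₁ ++ u ∈ coverLang ω) (hu : 0 < ω u) {n : ℕ} (hn : w₂.length ≤ n) :
    w₁ ++ (List.replicate n u).flatten ++ w₂ ∈ coverLang ω := by
  refine append_mem_coverLang_iff.2
    ⟨append_flatten_replicate_mem_coverLang hω_nil hω_app h hu.le n, fun v hv => ?_⟩
  have hw₁ := h w₁ (List.prefix_append w₁ u)
  have hv_ge := neg_length_le hω_nil hω_app hω_ge v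
  have hv_len : (v.length : ℤ) ≤ n := by exact_mod_cast hv.length_le.trans hn
  rw [hω_app, hω_app, map_flatten_replicate_eq_nsmul hω_nil hω_app, nsmul_eq_mul]
  nlinarith
end Words

theorem pow_add_one_add_mul_pow {M : Type*} [Monoid M] {a z : M} (h : a * a * z = a) (m j : ℕ) :
    a ^ (m + 1 + j) * z ^ j = a ^ (m + 1) := by
  induction j with
  | zero => simp
  | succ j ih =>
    calc a ^ (m + 1 + (j + 1)) * z ^ (j + 1) = a ^ (m + j) * (a * a * z) * z ^ j := by
          rw [show m + 1 + (j + 1) = m + j + 1 + 1 by omega, pow_succ, pow_succ, pow_succ']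
          simp only [mul_assoc]
      _ = a ^ (m + 1 + j) * z ^ j := by rw [h, ← pow_succ, add_right_comm]
      _ = a ^ (m + 1) := ih

section Rank
variable {K : Type*} [Field K] {n : Type*} [Fintype n] [DecidableEq n]

theorem Matrix.exists_mul_self_mul_eq_of_rank_eq {M : Matrix n n K}
    (h : M.rank = (M * M).rank) : ∃ Z, M * M * Z = M := by
  have hrange : LinearMap.range (M * M).mulVecLin = LinearMap.range M.mulVecLin := by
    refine Submodule.eq_of_le_of_finrank_eq ?_ h.symm
    rw [Matrix.mulVecLin_mul]
    exact LinearMap.range_comp_le_range _ _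
  have hcol : ∀ j, M.col j ∈ LinearMap.range (M * M).mulVecLin := fun j => by
    rw [hrange, ← Matrix.mulVec_single_one]
    exact LinearMap.mem_range_self _ _
  choose x hx using hcol
  refine ⟨(Matrix.of x).transpose, Matrix.ext_of_mulVec_single fun j => ?_⟩
  rw [← Matrix.mulVec_mulVec, Matrix.mulVec_single_one, Matrix.mulVec_single_one]
  exact hx j
end Rank

open MvPolynomial

section MatrixPolynomial
variable {K : Type*} [CommRing K] {n : Type*} [Fintype n]

def evalMatrix (Y : Matrix n n K) : MvPolynomial (n × n) K →ₐ[K] K :=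
  aeval fun ij => Y ij.1 ij.2

def sandwichSubst (A B : Matrix n n K) : MvPolynomial (n × n) K →ₐ[K] MvPolynomial (n × n) K :=
  bind₁ fun ij => (A.map C * Matrix.of (fun i j => X (i, j)) * B.map C :
    Matrix n n (MvPolynomial (n × n) K)) ij.1 ij.2

theorem evalMatrix_sandwichSubst (A B Y : Matrix n n K) (p : MvPolynomial (n × n) K) :
    evalMatrix Y (sandwichSubst A B p) = evalMatrix (A * Y * B) p := by
  rw [evalMatrix, sandwichSubst, aeval_bind₁]
  congr 2
  funext ⟨i, j⟩
  set y : n × n → K := fun ij => Y ij.1 ij.2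
  have hX : (Matrix.of fun i j => (X (i, j) : MvPolynomial (n × n) K)).map (aeval y) = Y := by
    ext; simp [y]
  rw [← Matrix.map_apply (f := ⇑(aeval y)), Matrix.map_mul, Matrix.map_mul, hX]
  simp only [aeval_eq_eval, Matrix.map_map, Function.comp_def, eval_C, Matrix.map_id']

theorem evalMatrix_eq_zero_of_evalMatrix_pow_eq_zero [DecidableEq n] [IsNoetherianRing K]
    {M Z : Matrix n n K} (hZ : M * M * Z = M) {p : MvPolynomial (n × n) K} {N : ℕ}
    (hp : ∀ k, N ≤ k → evalMatrix (M ^ k) p = 0) : evalMatrix M p = 0 := by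
  let I : ℕ →o Ideal (MvPolynomial (n × n) K) :=
    ⟨fun k => ⨅ m ≥ k, RingHom.ker (evalMatrix (M ^ m)),
      fun k k' hk => le_iInf₂ fun m hm => iInf₂_le m (hk.trans hm)⟩
  have mem_I {k q} : q ∈ I k ↔ ∀ m, k ≤ m → evalMatrix (M ^ m) q = 0 := by
    simp [I, Submodule.mem_iInf]
  obtain ⟨s, hs⟩ := monotone_stabilizes_iff_noetherian.mpr inferInstance I
  have hp_s : p ∈ I s := hs (N + s) (by omega) ▸ I.monotone (by omega) (mem_I.2 hp)
  have hshift : sandwichSubst 1 (Z ^ s) p ∈ I s := by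
    refine hs (s + 1 + s) (by omega) ▸ mem_I.2 fun m hm => ?_
    obtain ⟨k, rfl⟩ : ∃ k, m = k + 1 + s := ⟨m - 1 - s, by omega⟩
    rw [evalMatrix_sandwichSubst, one_mul, pow_add_one_add_mul_pow hZ]
    exact mem_I.1 hp_s (k + 1) (by omega)
  have h := mem_I.1 (I.monotone (Nat.le_succ s) hshift) (0 + 1 + s) (by omega)
  rwa [evalMatrix_sandwichSubst, one_mul, pow_add_one_add_mul_pow hZ, zero_add, pow_one] at h
end MatrixPolynomial

theorem liftMat_mul {d : ℕ} (A B : Matrix (Fin d) (Fin d) ℚ) :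
    liftMat (A * B) = liftMat A * liftMat B :=
  Matrix.map_mul

theorem liftMat_pow {d : ℕ} (A : Matrix (Fin d) (Fin d) ℚ) (k : ℕ) :
    liftMat (A ^ k) = liftMat A ^ k :=
  map_pow (algebraMap ℚ Qbar).mapMatrix A k

theorem subset_matZClosure {d : ℕ} (S : Set (Matrix (Fin d) (Fin d) Qbar)) :
    S ⊆ matZClosure d S :=
  fun _ hA _ hp => hp _ hA

theorem matZClosure_eq_of_subset_of_subset_matZClosure {d : ℕ}
    {S T : Set (Matrix (Fin d) (Fin d) Qbar)} (hST : S ⊆ T) (hTS : T ⊆ matZClosure d S) :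
    matZClosure d S = matZClosure d T := by
  ext A
  exact ⟨fun hA p hp => hA p fun B hB => hp B (hST hB),
    fun hA p hp => hA p fun B hB => hTS hB p hp⟩

theorem mul_mul_mem_matZClosure {d : ℕ} {S : Set (Matrix (Fin d) (Fin d) Qbar)}
    {A M B Z : Matrix (Fin d) (Fin d) Qbar} (hZ : M * M * Z = M) {N : ℕ}
    (hS : ∀ k, N ≤ k → A * M ^ k * B ∈ S) : A * M * B ∈ matZClosure d S := by
  intro p hp
  have h := evalMatrix_eq_zero_of_evalMatrix_pow_eq_zero (p := sandwichSubst A B p) hZ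
    fun k hk => by
      rw [evalMatrix_sandwichSubst]
      exact hp _ (hS k hk)
  rwa [evalMatrix_sandwichSubst] at h

theorem cover_closure_of_approximation_general {α : Type*} (d : ℕ)
    (φ : List α → Matrix (Fin d) (Fin d) ℚ)
    (hφ_nil : φ [] = 1) (hφ_app : ∀ u v : List α, φ (u ++ v) = φ u * φ v)
    (ω : List α → ℤ)
    (hω_nil : ω [] = 0) (hω_app : ∀ u v : List α, ω (u ++ v) = ω u + ω v)
    (hω_letter : ∀ σ : α, ω [σ] = -1 ∨ ω [σ] = 0 ∨ ω [σ] = 1)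
    (L : Set (List α))
    (hsub : coverLang ω ⊆ L)
    (hfac : ∀ w ∈ L \ coverLang ω,
        ∃ w₁ u w₂ : List α, w = w₁ ++ u ++ w₂ ∧ MatStable (φ u) ∧ 0 < ω u ∧
          ∀ w' : List α, w' <+: (w₁ ++ u) → 0 ≤ ω w') :
    matZClosure d ((fun w => liftMat (φ w)) '' coverLang ω) =
      matZClosure d ((fun w => liftMat (φ w)) '' L) := by
  refine matZClosure_eq_of_subset_of_subset_matZClosure (Set.image_mono hsub) ?_
  rintro _ ⟨w, hwL, rfl⟩
  by_cases hwC : w ∈ coverLang ω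
  · exact subset_matZClosure _ ⟨w, hwC, rfl⟩
  obtain ⟨w₁, u, w₂, rfl, hu, hωu, hpre⟩ := hfac w ⟨hwL, hwC⟩
  obtain ⟨Z, hZ⟩ := Matrix.exists_mul_self_mul_eq_of_rank_eq hu
  have hω_ge (σ : α) : -1 ≤ ω [σ] := by rcases hω_letter σ with h | h | h <;> omega
  show liftMat (φ (w₁ ++ u ++ w₂)) ∈ _
  rw [hφ_app, hφ_app, liftMat_mul, liftMat_mul]
  have hZ' : liftMat (φ u) * liftMat (φ u) * liftMat Z = liftMat (φ u) := by
    rw [← liftMat_mul, ← liftMat_mul, hZ]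
  refine mul_mul_mem_matZClosure hZ' (N := w₂.length) fun k hk =>
    ⟨_, append_flatten_replicate_append_mem_coverLang hω_nil hω_app hω_ge hpre hωu hk, ?_⟩
  dsimp only
  rw [hφ_app, hφ_app, map_flatten_replicate_eq_pow hφ_nil hφ_app, liftMat_mul, liftMat_mul,
    liftMat_pow]

/-- Let `L` be any language containing the coverability language `L_C(ω)` such that
every word `w ∈ L \ L_C(ω)` factors as `w = w₁ u w₂` with `φ(u)` stable, `ω(u) > 0`,
and every prefix of `w₁u` of nonnegative weight.  Then `φ(L_C(ω))` and `φ(L)` have the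
same Zariski closure in `M_d(ℚ̄)`. -/
theorem cover_closure_of_approximation {α : Type*} [Fintype α] (d : ℕ)
    (φ : List α → Matrix (Fin d) (Fin d) ℚ)
    (hφ_nil : φ [] = 1) (hφ_app : ∀ u v : List α, φ (u ++ v) = φ u * φ v)
    (ω : List α → ℤ)
    (hω_nil : ω [] = 0) (hω_app : ∀ u v : List α, ω (u ++ v) = ω u + ω v)
    (hω_letter : ∀ σ : α, ω [σ] = -1 ∨ ω [σ] = 0 ∨ ω [σ] = 1)
    (L : Set (List α))
    (hsub : coverLang ω ⊆ L)
    (hfac : ∀ w ∈ L \ coverLang ω,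
        ∃ w₁ u w₂ : List α, w = w₁ ++ u ++ w₂ ∧ MatStable (φ u) ∧ 0 < ω u ∧
          ∀ w' : List α, w' <+: (w₁ ++ u) → 0 ≤ ω w') :
    matZClosure d ((fun w => liftMat (φ w)) '' coverLang ω) =
      matZClosure d ((fun w => liftMat (φ w)) '' L) :=
  cover_closure_of_approximation_general d φ hφ_nil hφ_app ω hω_nil hω_app hω_letter L hsub hfac

end
end

section
/- Suppose that φ(σ) is an invertible matrix for every σ ∈ Σ. Let j : GL_d(ℚ̄) → ℚ̄^{d²+1} be the embedding j(A) = (A, det(A)⁻¹), and let S be the set of all A ∈ GL_d(ℚ̄) such that j(A) lies in the Zariski closure of j(φ(L_C(ω))) in ℚ̄^{d²+1}. Then S is a subgroup of GL_d(ℚ̄) (it contains the identity and is closed under multiplication and inverses). The same conclusion holds with L_R(ω) in place of L_C(ω). -/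
noncomputable section

/-- The Zariski closure of a subset of affine space `ℚ̄^ι`: the common zero set of all
polynomials vanishing on the set. -/
def zClosure {ι : Type*} (S : Set (ι → Qbar)) : Set (ι → Qbar) :=
  {A | ∀ p : MvPolynomial ι Qbar,
      (∀ B ∈ S, MvPolynomial.eval B p = 0) → MvPolynomial.eval A p = 0}

/-- The embedding `j : GL_d(ℚ̄) → ℚ̄^(d²+1)`, `j(A) = (A, det(A)⁻¹)`; the index type
`(Fin d × Fin d) ⊕ Unit` represents the `d² + 1` coordinates. -/
def jEmb {d : ℕ} (A : Matrix (Fin d) (Fin d) Qbar) : (Fin d × Fin d) ⊕ Unit → Qbar :=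
  Sum.elim (fun ij => A ij.1 ij.2) (fun _ => (A.det)⁻¹)

/-- The set of invertible matrices `A` with `j(A)` in the Zariski closure of the image
under `j` of a given set of invertible matrices. -/
def glClosure {d : ℕ} (T : Set (Matrix (Fin d) (Fin d) Qbar)) :
    Set (Matrix (Fin d) (Fin d) Qbar) :=
  {A | IsUnit A ∧ jEmb A ∈ zClosure (jEmb '' T)}

/-- `S` is a subgroup of `GL_d(ℚ̄)`: it contains the identity and is closed under
multiplication and inverses. -/
def IsMatSubgroup {d : ℕ} (S : Set (Matrix (Fin d) (Fin d) Qbar)) : Prop :=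
  (1 : Matrix (Fin d) (Fin d) Qbar) ∈ S ∧
    (∀ A ∈ S, ∀ B ∈ S, A * B ∈ S) ∧ (∀ A ∈ S, A⁻¹ ∈ S)

/-- The reachability language of `ω`: words of weight zero all of whose prefixes have
nonnegative weight. -/
def reachLang {α : Type*} (ω : List α → ℤ) : Set (List α) :=
  {w | ω w = 0 ∧ ∀ u : List α, u <+: w → 0 ≤ ω u}

/-! ### Auxiliary machinery -/

namespace ClosureAux

open MvPolynomial

/-- The vanishing ideal of a set of points. -/
def vIdeal {ι : Type*} (W : Set (ι → Qbar)) : Ideal (MvPolynomial ι Qbar) where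
  carrier := {p | ∀ x ∈ W, eval x p = 0}
  add_mem' := by intro p q hp hq x hx; simp [hp x hx, hq x hx]
  zero_mem' := by intro x hx; simp
  smul_mem' := by intro c p hp x hx; simp [smul_eq_mul, hp x hx]

lemma mem_vIdeal {ι : Type*} {W : Set (ι → Qbar)} {p : MvPolynomial ι Qbar} :
    p ∈ vIdeal W ↔ ∀ x ∈ W, eval x p = 0 := Iff.rfl

lemma subset_zClosure {ι : Type*} (S : Set (ι → Qbar)) : S ⊆ zClosure S :=
  fun x hx p hp => hp x hx

lemma zClosure_congr {ι : Type*} {W W' : Set (ι → Qbar)} (h : vIdeal W = vIdeal W') :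
    zClosure W = zClosure W' := by
  ext x
  constructor <;> intro hx p hp
  · exact hx p (mem_vIdeal.mp (h ▸ (mem_vIdeal.mpr hp)))
  · exact hx p (mem_vIdeal.mp (h ▸ (mem_vIdeal.mpr hp)))

/-- `f` is a polynomial self-map of affine space. -/
def IsPolyMap {ι : Type*} (f : (ι → Qbar) → (ι → Qbar)) : Prop :=
  ∃ F : ι → MvPolynomial ι Qbar, ∀ x i, f x i = eval x (F i)

lemma IsPolyMap.eval_comp {ι : Type*} {f : (ι → Qbar) → (ι → Qbar)} (hf : IsPolyMap f)
    (p : MvPolynomial ι Qbar) : ∃ q, ∀ x, eval x q = eval (f x) p := by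
  obtain ⟨F, hF⟩ := hf
  refine ⟨bind₁ F p, fun x => ?_⟩
  have : eval x (bind₁ F p) = eval (fun i => eval x (F i)) p := eval₂Hom_bind₁ _ _ _ _
  rw [this, show f x = fun i => eval x (F i) from funext (hF x)]

lemma IsPolyMap.comp {ι : Type*} {f g : (ι → Qbar) → (ι → Qbar)} (hf : IsPolyMap f)
    (hg : IsPolyMap g) : IsPolyMap (f ∘ g) := by
  obtain ⟨F, hF⟩ := hf
  choose Q hQ using fun i => hg.eval_comp (F i)
  exact ⟨Q, fun x i => by rw [Function.comp_apply, hF, hQ]⟩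

lemma IsPolyMap.id {ι : Type*} : IsPolyMap (id : (ι → Qbar) → _) :=
  ⟨fun i => X i, by simp⟩

lemma IsPolyMap.iterate {ι : Type*} {f : (ι → Qbar) → (ι → Qbar)} (hf : IsPolyMap f)
    (n : ℕ) : IsPolyMap f^[n] := by
  induction n with
  | zero => exact IsPolyMap.id
  | succ n ih => rw [Function.iterate_succ']; exact hf.comp ih

/-- Polynomial maps send the Zariski closure of `S` into any Zariski closure
containing the image of `S`. -/
lemma polymap_mem_zClosure {ι : Type*} {f : (ι → Qbar) → (ι → Qbar)} (hf : IsPolyMap f)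
    {S S' : Set (ι → Qbar)} (hmaps : ∀ x ∈ S, f x ∈ zClosure S')
    {x : ι → Qbar} (hx : x ∈ zClosure S) : f x ∈ zClosure S' := by
  intro p hp
  obtain ⟨q, hq⟩ := hf.eval_comp p
  have hqS : ∀ y ∈ S, eval y q = 0 := fun y hy => by rw [hq]; exact hmaps y hy p hp
  rw [← hq]; exact hx q hqS

/-- **Noetherian core.** If `L` is a polynomial bijection with polynomial inverse `L'`
which maps a Zariski closure `Z` into itself, then `L'` also maps `Z` into itself. -/
lemma inv_maps_closure {ι : Type*} [Finite ι] {L L' : (ι → Qbar) → (ι → Qbar)}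
    (hL : IsPolyMap L) (hL' : IsPolyMap L')
    (hLL' : ∀ x, L (L' x) = x) (hL'L : ∀ x, L' (L x) = x)
    {S : Set (ι → Qbar)} (hmaps : ∀ x ∈ zClosure S, L x ∈ zClosure S)
    {y : ι → Qbar} (hy : y ∈ zClosure S) : L' y ∈ zClosure S := by
  set Z : Set (ι → Qbar) := zClosure S with hZdef
  have hZclosed : zClosure Z ⊆ Z := fun x hx p hp => hx p (fun z hz => hz p hp)
  -- the descending chain of closed sets `D n = (L')⁻ⁿ Z`
  set D : ℕ → Set (ι → Qbar) := fun n => {x | L'^[n] x ∈ Z} with hDdef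
  have hDanti : ∀ n, D (n + 1) ⊆ D n := by
    intro n x hx
    have h1 : L'^[n] x = L (L'^[n + 1] x) := by
      rw [Function.iterate_succ_apply', hLL']
    show L'^[n] x ∈ Z
    rw [h1]
    exact hmaps _ hx
  have hDclosed : ∀ n, zClosure (D n) ⊆ D n := by
    intro n x hx
    show L'^[n] x ∈ Z
    apply hZclosed
    exact polymap_mem_zClosure (hL'.iterate n)
      (fun z hz => subset_zClosure Z hz) hx
  have hmono : Monotone (fun n => vIdeal (D n)) := by
    apply monotone_nat_of_le_succ
    intro n p hp x hx
    exact hp x (hDanti n hx)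
  obtain ⟨n, hn⟩ := monotone_stabilizes_iff_noetherian.mpr inferInstance
    ⟨fun n => vIdeal (D n), hmono⟩
  have hstab : vIdeal (D n) = vIdeal (D (n + 1)) := hn (n + 1) (Nat.le_succ n)
  have hDeq : D n = D (n + 1) := by
    refine Set.Subset.antisymm (fun x hx => ?_) (hDanti n)
    apply hDclosed (n + 1)
    have hxz : x ∈ zClosure (D n) := subset_zClosure _ hx
    rwa [zClosure_congr hstab] at hxz
  have hiter : ∀ m x, L'^[m] (L^[m] x) = x := by
    intro m
    induction m with
    | zero => intro x; rfl
    | succ m ih =>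
        intro x
        rw [Function.iterate_succ_apply L, Function.iterate_succ_apply' L', ih (L x), hL'L]
  have hmem : L^[n] y ∈ D n := by
    show L'^[n] (L^[n] y) ∈ Z
    rw [hiter n y]
    exact hy
  have hmem' : L^[n] y ∈ D (n + 1) := hDeq ▸ hmem
  have h2 : L'^[n + 1] (L^[n] y) ∈ Z := hmem'
  rwa [Function.iterate_succ_apply', hiter n y] at h2

abbrev Idx (d : ℕ) := (Fin d × Fin d) ⊕ Unit

/-- Left multiplication by `B` on `j`-coordinates; `c` acts on the `det⁻¹` coordinate. -/
def mulL {d : ℕ} (B : Matrix (Fin d) (Fin d) Qbar) (c : Qbar) (x : Idx d → Qbar) :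
    Idx d → Qbar :=
  Sum.elim (fun ij => ∑ k, B ij.1 k * x (Sum.inl (k, ij.2))) (fun _ => x (Sum.inr ()) * c)

/-- Right multiplication by `B` on `j`-coordinates. -/
def mulR {d : ℕ} (B : Matrix (Fin d) (Fin d) Qbar) (c : Qbar) (x : Idx d → Qbar) :
    Idx d → Qbar :=
  Sum.elim (fun ij => ∑ k, x (Sum.inl (ij.1, k)) * B k ij.2) (fun _ => x (Sum.inr ()) * c)

lemma isPolyMap_mulL {d : ℕ} (B : Matrix (Fin d) (Fin d) Qbar) (c : Qbar) :
    IsPolyMap (mulL B c) := by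
  refine ⟨Sum.elim (fun ij => ∑ k, C (B ij.1 k) * X (Sum.inl (k, ij.2)))
    (fun _ => X (Sum.inr ()) * C c), fun x i => ?_⟩
  cases i with
  | inl ij => simp [mulL]
  | inr u => simp [mulL]

lemma isPolyMap_mulR {d : ℕ} (B : Matrix (Fin d) (Fin d) Qbar) (c : Qbar) :
    IsPolyMap (mulR B c) := by
  refine ⟨Sum.elim (fun ij => ∑ k, X (Sum.inl (ij.1, k)) * C (B k ij.2))
    (fun _ => X (Sum.inr ()) * C c), fun x i => ?_⟩
  cases i with
  | inl ij => simp [mulR]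
  | inr u => simp [mulR]

lemma mulL_jEmb {d : ℕ} (B A : Matrix (Fin d) (Fin d) Qbar) :
    mulL B (B.det)⁻¹ (jEmb A) = jEmb (B * A) := by
  funext i
  cases i with
  | inl ij => simp [mulL, jEmb, Matrix.mul_apply]
  | inr u => simp [mulL, jEmb, Matrix.det_mul, mul_inv, mul_comm]

lemma mulR_jEmb {d : ℕ} (B A : Matrix (Fin d) (Fin d) Qbar) :
    mulR B (B.det)⁻¹ (jEmb A) = jEmb (A * B) := by
  funext i
  cases i with
  | inl ij => simp [mulR, jEmb, Matrix.mul_apply]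
  | inr u => simp only [mulR, jEmb, Sum.elim_inr, Matrix.det_mul, mul_inv]

lemma mulL_mulL {d : ℕ} (B' B : Matrix (Fin d) (Fin d) Qbar) (c' c : Qbar)
    (x : Idx d → Qbar) : mulL B' c' (mulL B c x) = mulL (B' * B) (c * c') x := by
  funext i
  cases i with
  | inl ij =>
      simp only [mulL, Sum.elim_inl, Matrix.mul_apply, Finset.mul_sum, Finset.sum_mul,
        mul_assoc]
      rw [Finset.sum_comm]
  | inr u => simp [mulL, mul_assoc]

lemma mulL_one_one {d : ℕ} (x : Idx d → Qbar) : mulL 1 1 x = x := by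
  funext i
  cases i with
  | inl ij => simp [mulL, Matrix.one_apply, ite_mul]
  | inr u => simp [mulL]

/-- **Main abstract step**: the `glClosure` of a submonoid of `GL_d(ℚ̄)` is a
subgroup. -/
theorem isMatSubgroup_glClosure {d : ℕ} (T : Set (Matrix (Fin d) (Fin d) Qbar))
    (h1 : (1 : Matrix (Fin d) (Fin d) Qbar) ∈ T)
    (hmul : ∀ a ∈ T, ∀ b ∈ T, a * b ∈ T) :
    IsMatSubgroup (glClosure T) := by
  set Z : Set (Idx d → Qbar) := zClosure (jEmb '' T) with hZdef
  have hR : ∀ b ∈ T, ∀ x ∈ Z, mulR b (b.det)⁻¹ x ∈ Z := by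
    intro b hb x hx
    refine polymap_mem_zClosure (isPolyMap_mulR b _) ?_ hx
    rintro y ⟨t, ht, rfl⟩
    rw [mulR_jEmb]
    exact subset_zClosure _ ⟨t * b, hmul t ht b hb, rfl⟩
  have hL : ∀ A : Matrix (Fin d) (Fin d) Qbar, jEmb A ∈ Z →
      ∀ x ∈ Z, mulL A (A.det)⁻¹ x ∈ Z := by
    intro A hA x hx
    refine polymap_mem_zClosure (isPolyMap_mulL A _) ?_ hx
    rintro y ⟨t, ht, rfl⟩
    rw [mulL_jEmb, ← mulR_jEmb]
    exact hR t ht _ hA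
  have h1Z : jEmb (1 : Matrix (Fin d) (Fin d) Qbar) ∈ Z :=
    subset_zClosure _ ⟨1, h1, rfl⟩
  refine ⟨⟨isUnit_one, h1Z⟩, ?_, ?_⟩
  · rintro A ⟨hAu, hAZ⟩ B ⟨hBu, hBZ⟩
    refine ⟨hAu.mul hBu, ?_⟩
    rw [← mulL_jEmb]
    exact hL A hAZ _ hBZ
  · rintro A ⟨hAu, hAZ⟩
    have hdet : IsUnit A.det := (Matrix.isUnit_iff_isUnit_det A).mp hAu
    have hdet0 : A.det ≠ 0 := hdet.ne_zero
    have hAiu : IsUnit A⁻¹ := by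
      rw [Matrix.isUnit_iff_isUnit_det, Matrix.det_nonsing_inv, Ring.inverse_eq_inv']
      exact isUnit_iff_ne_zero.mpr (inv_ne_zero hdet0)
    refine ⟨hAiu, ?_⟩
    have hLL' : ∀ x, mulL A (A.det)⁻¹ (mulL A⁻¹ A.det x) = x := by
      intro x
      rw [mulL_mulL, Matrix.mul_nonsing_inv A hdet, mul_inv_cancel₀ hdet0, mulL_one_one]
    have hL'L : ∀ x, mulL A⁻¹ A.det (mulL A (A.det)⁻¹ x) = x := by
      intro x
      rw [mulL_mulL, Matrix.nonsing_inv_mul A hdet, inv_mul_cancel₀ hdet0, mulL_one_one]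
    have hkey : mulL A⁻¹ A.det (jEmb 1) ∈ Z :=
      inv_maps_closure (isPolyMap_mulL A (A.det)⁻¹) (isPolyMap_mulL A⁻¹ A.det)
        hLL' hL'L (hL A hAZ) h1Z
    have hdetinv : A.det = ((A⁻¹).det)⁻¹ := by
      rw [Matrix.det_nonsing_inv, Ring.inverse_eq_inv', inv_inv]
    rw [hdetinv, mulL_jEmb, mul_one] at hkey
    exact hkey

end ClosureAux

/-! ### Language lemmas -/

section Lang

variable {α : Type*} {ω : List α → ℤ}

lemma nil_mem_coverLang (hω_nil : ω [] = 0) : [] ∈ coverLang ω := by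
  intro u hu
  rw [List.prefix_nil.mp hu, hω_nil]

lemma append_mem_coverLang (hω_app : ∀ u v : List α, ω (u ++ v) = ω u + ω v)
    {u v : List α} (hu : u ∈ coverLang ω) (hv : v ∈ coverLang ω) :
    u ++ v ∈ coverLang ω := by
  intro p hp
  rcases List.prefix_or_prefix_of_prefix hp (List.prefix_append u v) with h | h
  · exact hu p h
  · obtain ⟨p', rfl⟩ := h
    have hp' : p' <+: v := (List.prefix_append_right_inj u).mp hp
    rw [hω_app]
    have h1 : 0 ≤ ω u := hu u List.prefix_rfl
    have h2 : 0 ≤ ω p' := hv p' hp'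
    omega

lemma nil_mem_reachLang (hω_nil : ω [] = 0) : [] ∈ reachLang ω :=
  ⟨hω_nil, nil_mem_coverLang hω_nil⟩

lemma append_mem_reachLang (hω_app : ∀ u v : List α, ω (u ++ v) = ω u + ω v)
    {u v : List α} (hu : u ∈ reachLang ω) (hv : v ∈ reachLang ω) :
    u ++ v ∈ reachLang ω :=
  ⟨by rw [hω_app, hu.1, hv.1, add_zero], append_mem_coverLang hω_app hu.2 hv.2⟩

end Lang

/-- Suppose every letter is mapped by `φ` to an invertible matrix.  Let `S` consist of
all invertible `A ∈ GL_d(ℚ̄)` such that `j(A)` lies in the Zariski closure of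
`j(φ(L_C(ω)))` in `ℚ̄^(d²+1)`, where `j(A) = (A, det(A)⁻¹)`.  Then `S` is a subgroup
of `GL_d(ℚ̄)`; the same holds with `L_R(ω)` in place of `L_C(ω)`. -/
theorem invertible_closure_is_group {α : Type*} [Fintype α] (d : ℕ)
    (φ : List α → Matrix (Fin d) (Fin d) ℚ)
    (hφ_nil : φ [] = 1) (hφ_app : ∀ u v : List α, φ (u ++ v) = φ u * φ v)
    (hφ_inv : ∀ σ : α, IsUnit (φ [σ]))
    (ω : List α → ℤ)
    (hω_nil : ω [] = 0) (hω_app : ∀ u v : List α, ω (u ++ v) = ω u + ω v)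
    (hω_letter : ∀ σ : α, ω [σ] = -1 ∨ ω [σ] = 0 ∨ ω [σ] = 1) :
    IsMatSubgroup (glClosure ((fun w => liftMat (φ w)) '' coverLang ω)) ∧
    IsMatSubgroup (glClosure ((fun w => liftMat (φ w)) '' reachLang ω)) := by
  have hlift1 : liftMat (φ []) = 1 := by
    rw [hφ_nil]
    exact Matrix.map_one _ (map_zero _) (map_one _)
  have hliftmul : ∀ u v : List α, liftMat (φ (u ++ v)) = liftMat (φ u) * liftMat (φ v) := by
    intro u v
    rw [hφ_app]
    exact Matrix.map_mul
  constructor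
  · apply ClosureAux.isMatSubgroup_glClosure
    · exact ⟨[], nil_mem_coverLang hω_nil, hlift1⟩
    · rintro a ⟨u, hu, rfl⟩ b ⟨v, hv, rfl⟩
      exact ⟨u ++ v, append_mem_coverLang hω_app hu hv, hliftmul u v⟩
  · apply ClosureAux.isMatSubgroup_glClosure
    · exact ⟨[], nil_mem_reachLang hω_nil, hlift1⟩
    · rintro a ⟨u, hu, rfl⟩ b ⟨v, hv, rfl⟩
      exact ⟨u ++ v, append_mem_reachLang hω_app hu hv, hliftmul u v⟩

end
end
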